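/- arXiv:2207.00840 — 8 statements merged into one kernel-verified Lean document; each statement's English description precedes it below -/
import Mathlib

section
/- Let A, B be real symmetric m×m matrices and define the quadratic forms f(x) = xᵀAx and g(x) = xᵀBx on ℝᵐ. Suppose there exists x̂ ∈ ℝᵐ with g(x̂) > 0. Then the following are equivalent: (1) for all x ∈ ℝᵐ, if g(x) ≥ 0 then f(x) ≥ 0; (2) there exists a real number λ ≥ 0 such that f(x) − λ g(x) ≥ 0 for all x ∈ ℝᵐ (equivalently, A − λB is positive semidefinite). -/
open Matrix

lemma quad_expand {m : ℕ} (M : Matrix (Fin m) (Fin m) ℝ) (x y : Fin m → ℝ) (α β : ℝ) :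
    (α • x + β • y) ⬝ᵥ M.mulVec (α • x + β • y) =
      α^2 * (x ⬝ᵥ M.mulVec x) + α*β*(x ⬝ᵥ M.mulVec y + y ⬝ᵥ M.mulVec x)
        + β^2 * (y ⬝ᵥ M.mulVec y) := by
  simp [Matrix.mulVec_add, Matrix.mulVec_smul, dotProduct_add, dotProduct_smul,
    add_dotProduct, smul_dotProduct, smul_eq_mul]
  ring

lemma quad_cont {m : ℕ} (M : Matrix (Fin m) (Fin m) ℝ) :
    Continuous fun z : Fin m → ℝ => z ⬝ᵥ M.mulVec z := by
  simp only [dotProduct, Matrix.mulVec]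
  fun_prop

/-- Key IVT lemma: if two points give the same value `k` of the quadratic form of `M`,
then every value between their `N`-values is attained on the level set `{q_M = k}`. -/
lemma key {m : ℕ} (M N : Matrix (Fin m) (Fin m) ℝ) (x y : Fin m → ℝ)
    (hq : x ⬝ᵥ M.mulVec x = y ⬝ᵥ M.mulVec y) (t : ℝ)
    (ht : t ∈ Set.uIcc (x ⬝ᵥ N.mulVec x) (y ⬝ᵥ N.mulVec y)) :
    ∃ z : Fin m → ℝ, z ⬝ᵥ M.mulVec z = x ⬝ᵥ M.mulVec x ∧ z ⬝ᵥ N.mulVec z = t := by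
  set k := x ⬝ᵥ M.mulVec x with hk
  set c := x ⬝ᵥ M.mulVec y + y ⬝ᵥ M.mulVec x with hc
  by_cases hk0 : k = 0
  · -- path through the origin: coefficients never both nonzero
    set γ : ℝ → (Fin m → ℝ) := fun s => (max (1-s) 0) • x + (max (s-1) 0) • y with hγ
    have hγq : ∀ s : ℝ, (γ s) ⬝ᵥ M.mulVec (γ s) = k := by
      intro s
      rw [hγ]
      rw [quad_expand]
      have hprod : max (1-s) 0 * max (s-1) 0 = 0 := by
        rcases le_total s 1 with h | h
        · have h2 : max (s-1) 0 = 0 := max_eq_right (by linarith)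
          rw [h2, mul_zero]
        · have h2 : max (1-s) 0 = 0 := max_eq_right (by linarith)
          rw [h2, zero_mul]
      rw [← hk, ← hq, hk0]
      linear_combination (x ⬝ᵥ M.mulVec y + y ⬝ᵥ M.mulVec x) * hprod
    have hcont : Continuous γ := by
      rw [hγ]; fun_prop
    have hφ : ContinuousOn (fun s => (γ s) ⬝ᵥ N.mulVec (γ s)) (Set.uIcc 0 2) :=
      ((quad_cont N).comp hcont).continuousOn
    have h0 : (γ 0) ⬝ᵥ N.mulVec (γ 0) = x ⬝ᵥ N.mulVec x := by
      simp [hγ]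
    have h2 : (γ 2) ⬝ᵥ N.mulVec (γ 2) = y ⬝ᵥ N.mulVec y := by
      norm_num [hγ]
    have := intermediate_value_uIcc hφ
    rw [h0, h2] at this
    obtain ⟨s, _, hs⟩ := this ht
    exact ⟨γ s, hγq s, hs⟩
  · -- k ≠ 0 : rescaled elliptic path
    set ε : ℝ := if 0 ≤ c / k then 1 else -1 with hε
    have hε2 : ε^2 = 1 := by rw [hε]; split <;> norm_num
    set d : ℝ := ε * c / k with hd
    have hd0 : 0 ≤ d := by
      rw [hd, hε]
      split <;> rename_i h
      · simpa using h
      · rw [neg_one_mul, neg_div]; linarith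
    set n : ℝ → ℝ := fun s => Real.sqrt ((1-s)^2 + s^2 + d*s*(1-s)) with hn
    have hinner : ∀ s ∈ Set.Icc (0:ℝ) 1, (0:ℝ) < (1-s)^2 + s^2 + d*s*(1-s) := by
      rintro s ⟨h0, h1⟩
      nlinarith [mul_nonneg (mul_nonneg hd0 h0) (by linarith : (0:ℝ) ≤ 1 - s)]
    have hnpos : ∀ s ∈ Set.Icc (0:ℝ) 1, 0 < n s := fun s hs =>
      Real.sqrt_pos.mpr (hinner s hs)
    have hnsq : ∀ s ∈ Set.Icc (0:ℝ) 1, (n s)^2 = (1-s)^2 + s^2 + d*s*(1-s) := fun s hs =>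
      Real.sq_sqrt (hinner s hs).le
    set γ : ℝ → (Fin m → ℝ) := fun s => ((1-s)/(n s)) • x + (s*ε/(n s)) • y with hγ
    have hγq : ∀ s ∈ Set.Icc (0:ℝ) 1, (γ s) ⬝ᵥ M.mulVec (γ s) = k := by
      intro s hs
      rw [hγ]; rw [quad_expand, ← hk, ← hq, ← hc]
      have hn0 : n s ≠ 0 := (hnpos s hs).ne'
      have hsq := hnsq s hs
      have hεc : ε * c = d * k := by rw [hd]; field_simp
      have key2 : ((1-s)^2)*k + (((1-s))*(s*ε))*c + ((s*ε)^2)*k = k * (n s)^2 := by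
        rw [hsq]
        linear_combination ((1-s)*s)*hεc + (s^2*k)*hε2
      calc ((1-s)/n s)^2 * k + ((1-s)/n s)*(s*ε/n s)*c + (s*ε/n s)^2 * k
          = (((1-s)^2)*k + (((1-s))*(s*ε))*c + ((s*ε)^2)*k) / (n s)^2 := by ring
        _ = (k * (n s)^2)/(n s)^2 := by rw [key2]
        _ = k := by field_simp
    have hcontn : ContinuousOn n (Set.Icc 0 1) := by
      rw [hn]; fun_prop
    have hcontγ : ContinuousOn γ (Set.Icc 0 1) := by
      rw [hγ]
      apply ContinuousOn.add
      · exact ContinuousOn.smul (ContinuousOn.div (by fun_prop) hcontn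
          (fun s hs => (hnpos s hs).ne')) continuousOn_const
      · exact ContinuousOn.smul (ContinuousOn.div (by fun_prop) hcontn
          (fun s hs => (hnpos s hs).ne')) continuousOn_const
    have hφ : ContinuousOn (fun s => (γ s) ⬝ᵥ N.mulVec (γ s)) (Set.uIcc 0 1) := by
      rw [Set.uIcc_of_le (by norm_num : (0:ℝ) ≤ 1)]
      exact (quad_cont N).comp_continuousOn hcontγ
    have hn0v : n 0 = 1 := by rw [hn]; norm_num
    have hn1v : n 1 = 1 := by rw [hn]; norm_num
    have h0 : (γ 0) ⬝ᵥ N.mulVec (γ 0) = x ⬝ᵥ N.mulVec x := by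
      rw [hγ]; simp [hn0v]
    have h1 : (γ 1) ⬝ᵥ N.mulVec (γ 1) = y ⬝ᵥ N.mulVec y := by
      rw [hγ]; rw [quad_expand]; rw [hn1v]
      simp only [sub_self, zero_div, ne_eq, one_ne_zero, not_false_eq_true, div_self,
        zero_pow, zero_mul, mul_zero, zero_add, add_zero, mul_one, div_one, one_mul]
      linear_combination (y ⬝ᵥ N.mulVec y) * hε2
    have := intermediate_value_uIcc hφ
    rw [h0, h1] at this
    obtain ⟨s, hsmem, hs⟩ := this ht
    rw [Set.uIcc_of_le (by norm_num : (0:ℝ) ≤ 1)] at hsmem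
    exact ⟨γ s, hγq s hsmem, hs⟩

lemma quad_comb {m : ℕ} (A B : Matrix (Fin m) (Fin m) ℝ) (a b : ℝ) (x : Fin m → ℝ) :
    x ⬝ᵥ (a • A + b • B).mulVec x = a * (x ⬝ᵥ A.mulVec x) + b * (x ⬝ᵥ B.mulVec x) := by
  simp [Matrix.add_mulVec, Matrix.smul_mulVec, dotProduct_add, dotProduct_smul,
    smul_eq_mul]

/-- **Dines' theorem**: the joint range of two real quadratic forms is convex. -/
lemma dines {m : ℕ} (A B : Matrix (Fin m) (Fin m) ℝ) :
    Convex ℝ (Set.range fun x : Fin m → ℝ => (x ⬝ᵥ A.mulVec x, x ⬝ᵥ B.mulVec x)) := by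
  rintro _ ⟨x, rfl⟩ _ ⟨y, rfl⟩ a b ha hb hab
  simp only [Prod.smul_mk, smul_eq_mul, Prod.mk_add_mk, Set.mem_range, Prod.mk.injEq]
  set fx := x ⬝ᵥ A.mulVec x with hfx
  set gx := x ⬝ᵥ B.mulVec x with hgx
  set fy := y ⬝ᵥ A.mulVec y with hfy
  set gy := y ⬝ᵥ B.mulVec y with hgy
  by_cases hPQ : fx = fy ∧ gx = gy
  · obtain ⟨h1, h2⟩ := hPQ
    refine ⟨x, ?_, ?_⟩
    · linear_combination hfx.symm - fx * hab + b * h1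
    · linear_combination hgx.symm - gx * hab + b * h2
  set v1 := fy - fx with hv1
  set v2 := gy - gx with hv2
  have hv : 0 < v1^2 + v2^2 := by
    rcases not_and_or.mp hPQ with h | h
    · have h1 : v1 ≠ 0 := fun hz => h (by rw [hv1] at *; linarith [sub_eq_zero.mp hz])
      positivity
    · have h2 : v2 ≠ 0 := fun hz => h (by rw [hv2] at *; linarith [sub_eq_zero.mp hz])
      positivity
  set M := (-v2) • A + v1 • B with hM
  set N := v1 • A + v2 • B with hN
  have hqx : x ⬝ᵥ M.mulVec x = -v2 * fx + v1 * gx := quad_comb A B _ _ x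
  have hqy : y ⬝ᵥ M.mulVec y = -v2 * fy + v1 * gy := quad_comb A B _ _ y
  have hhx : x ⬝ᵥ N.mulVec x = v1 * fx + v2 * gx := quad_comb A B _ _ x
  have hhy : y ⬝ᵥ N.mulVec y = v1 * fy + v2 * gy := quad_comb A B _ _ y
  have hq : x ⬝ᵥ M.mulVec x = y ⬝ᵥ M.mulVec y := by
    rw [hqx, hqy, hv1, hv2]; ring
  set t := a * (x ⬝ᵥ N.mulVec x) + b * (y ⬝ᵥ N.mulVec y) with hT
  have hmem : t ∈ Set.uIcc (x ⬝ᵥ N.mulVec x) (y ⬝ᵥ N.mulVec y) :=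
    (convex_uIcc _ _) Set.left_mem_uIcc Set.right_mem_uIcc ha hb hab
  obtain ⟨z, hz1, hz2⟩ := key M N x y hq t hmem
  have e1 : -v2 * (z ⬝ᵥ A.mulVec z) + v1 * (z ⬝ᵥ B.mulVec z) = -v2 * fx + v1 * gx := by
    rw [← quad_comb A B (-v2) v1 z, ← hM, hz1, hqx]
  have e2 : v1 * (z ⬝ᵥ A.mulVec z) + v2 * (z ⬝ᵥ B.mulVec z)
      = a * (v1 * fx + v2 * gx) + b * (v1 * fy + v2 * gy) := by
    rw [← quad_comb A B v1 v2 z, ← hN, hz2, hT, hhx, hhy]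
  have hb2 : b = 1 - a := by linarith
  rw [hv1, hv2] at e1 e2 hv
  rw [hb2] at e2
  have hkeyf : ((fy-fx)^2 + (gy-gx)^2) * ((z ⬝ᵥ A.mulVec z) - (a * fx + (1-a) * fy)) = 0 := by
    linear_combination (fy - fx) * e2 - (gy - gx) * e1
  have hkeyg : ((fy-fx)^2 + (gy-gx)^2) * ((z ⬝ᵥ B.mulVec z) - (a * gx + (1-a) * gy)) = 0 := by
    linear_combination (gy - gx) * e2 + (fy - fx) * e1
  have hzf : (z ⬝ᵥ A.mulVec z) = a * fx + (1-a) * fy := by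
    rcases mul_eq_zero.mp hkeyf with h0 | h0
    · exfalso; linarith
    · linarith
  have hzg : (z ⬝ᵥ B.mulVec z) = a * gx + (1-a) * gy := by
    rcases mul_eq_zero.mp hkeyg with h0 | h0
    · exfalso; linarith
    · linarith
  exact ⟨z, by rw [hzf, hb2], by rw [hzg, hb2]⟩

/-- **Classical S-lemma.** Let `A, B` be real symmetric `m × m` matrices defining the
quadratic forms `f x = xᵀ A x` and `g x = xᵀ B x` on `ℝᵐ`. If there is `xhat` with
`g xhat > 0`, then `(∀ x, g x ≥ 0 → f x ≥ 0)` iff there exists `λ ≥ 0` with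
`f x - λ * g x ≥ 0` for all `x` (equivalently, `A - λ • B` is positive semidefinite). -/
theorem stmt_0 (m : ℕ) (A B : Matrix (Fin m) (Fin m) ℝ)
    (hA : A.IsSymm) (hB : B.IsSymm)
    (hgpos : ∃ xhat : Fin m → ℝ, 0 < xhat ⬝ᵥ B.mulVec xhat) :
    (∀ x : Fin m → ℝ, 0 ≤ x ⬝ᵥ B.mulVec x → 0 ≤ x ⬝ᵥ A.mulVec x) ↔
      ∃ lam : ℝ, 0 ≤ lam ∧
        (∀ x : Fin m → ℝ, 0 ≤ x ⬝ᵥ A.mulVec x - lam * (x ⬝ᵥ B.mulVec x)) ∧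
        (A - lam • B).PosSemidef := by
  constructor
  · intro h1
    -- separation of the convex range from the open quadrant
    set S : Set (ℝ × ℝ) := {p | p.1 < 0 ∧ 0 < p.2} with hS
    have hSconv : Convex ℝ S := by
      rintro p ⟨hp1, hp2⟩ q ⟨hq1, hq2⟩ a b ha hb hab
      constructor
      · rcases eq_or_lt_of_le ha with h | h
        · simp only [Prod.fst_add, Prod.smul_fst, smul_eq_mul]
          nlinarith
        · simp only [Prod.fst_add, Prod.smul_fst, smul_eq_mul]
          nlinarith
      · simp only [Prod.snd_add, Prod.smul_snd, smul_eq_mul]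
        rcases eq_or_lt_of_le ha with h | h
        · nlinarith
        · nlinarith
    have hSopen : IsOpen S := by
      have : S = (fun p : ℝ × ℝ => p.1) ⁻¹' (Set.Iio 0) ∩ (fun p : ℝ × ℝ => p.2) ⁻¹' (Set.Ioi 0) := by
        ext p; simp [hS, and_comm]
      rw [this]
      exact (isOpen_Iio.preimage continuous_fst).inter (isOpen_Ioi.preimage continuous_snd)
    set T := Set.range fun x : Fin m → ℝ => (x ⬝ᵥ A.mulVec x, x ⬝ᵥ B.mulVec x) with hT
    have hdisj : Disjoint S T := by
      rw [Set.disjoint_left]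
      rintro p ⟨hp1, hp2⟩ ⟨x, rfl⟩
      exact absurd (h1 x hp2.le) (not_le.mpr hp1)
    obtain ⟨f, U, hfS, hfT⟩ := geometric_hahn_banach_open hSconv hSopen (dines A B) hdisj
    set a : ℝ := f (1, 0) with ha
    set b : ℝ := f (0, 1) with hb
    have hflin : ∀ u v : ℝ, f (u, v) = a * u + b * v := by
      intro u v
      have : (u, v) = u • ((1:ℝ), (0:ℝ)) + v • ((0:ℝ), (1:ℝ)) := by
        simp [Prod.ext_iff]
      rw [this, f.map_add, f.map_smul, f.map_smul, smul_eq_mul, smul_eq_mul, ha, hb]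
      ring
    have hSineq : ∀ u v : ℝ, u < 0 → 0 < v → a * u + b * v < U := by
      intro u v hu hv
      rw [← hflin]
      exact hfS (u, v) ⟨hu, hv⟩
    have hTineq : ∀ x : Fin m → ℝ, U ≤ a * (x ⬝ᵥ A.mulVec x) + b * (x ⬝ᵥ B.mulVec x) := by
      intro x
      rw [← hflin]
      exact hfT _ ⟨x, rfl⟩
    -- basic sign facts
    have hU0 : U ≤ 0 := by
      have := hTineq 0
      simpa using this
    have hU0' : 0 ≤ U := by
      by_contra hc
      push_neg at hc
      rcases lt_trichotomy (b - a) 0 with h' | h' | h'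
      · have hε : 0 < U / (b - a) := div_pos_of_neg_of_neg hc h'
        have hne : b - a ≠ 0 := ne_of_lt h'
        have hlt := hSineq (-(U / (b - a))) (U / (b - a)) (by linarith) hε
        have heq : a * (-(U / (b - a))) + b * (U / (b - a)) = U := by
          field_simp
          ring
        rw [heq] at hlt
        exact lt_irrefl U hlt
      · have hlt := hSineq (-1) 1 (by norm_num) one_pos
        linarith
      · have hlt := hSineq (-1) 1 (by norm_num) one_pos
        linarith
    have hUeq : U = 0 := le_antisymm hU0 hU0'
    have hbneg : b ≤ 0 := by
      by_contra hc
      push_neg at hc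
      have := hSineq (-1) (max 1 ((U + a + 1) / b)) (by norm_num)
        (lt_of_lt_of_le one_pos (le_max_left _ _))
      have h2 : b * max 1 ((U + a + 1) / b) ≥ U + a + 1 := by
        have := le_max_right 1 ((U + a + 1) / b)
        calc U + a + 1 = b * ((U + a + 1) / b) := by field_simp
          _ ≤ b * max 1 ((U + a + 1) / b) := by
              apply mul_le_mul_of_nonneg_left this hc.le
      linarith
    have hapos : 0 < a := by
      rcases lt_or_ge 0 a with h | h
      · exact h
      -- a ≤ 0 : first show a ≥ 0
      have ha0 : 0 ≤ a := by
        by_contra hc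
        push_neg at hc
        have := hSineq (min (-1) ((U - b) / a - 1)) 1
          (lt_of_le_of_lt (min_le_left _ _) (by norm_num)) one_pos
        have hane0 : a ≠ 0 := ne_of_lt hc
        have h2 : a * min (-1) ((U - b) / a - 1) ≥ U - b - a := by
          have hle := min_le_right (-1) ((U - b) / a - 1)
          calc U - b - a = a * ((U - b) / a - 1) := by field_simp
            _ ≤ a * min (-1) ((U - b) / a - 1) := by
                apply mul_le_mul_of_nonpos_left hle hc.le
        linarith
      have haz : a = 0 := le_antisymm h ha0
      -- then a = 0 gives a contradiction with g(xhat) > 0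
      exfalso
      obtain ⟨xh, hxh⟩ := hgpos
      have h3 := hTineq xh
      rw [haz, hUeq] at h3
      simp only [zero_mul, zero_add] at h3
      have hb0 : 0 ≤ b := by nlinarith
      have hbz : b = 0 := le_antisymm hbneg hb0
      have := hSineq (-1) 1 (by norm_num) one_pos
      rw [haz, hbz, hUeq] at this
      linarith
    have hane : a ≠ 0 := hapos.ne'
    refine ⟨-b / a, div_nonneg (neg_nonneg.mpr hbneg) hapos.le, ?_, ?_⟩
    · intro x
      have h3 := hTineq x
      rw [hUeq] at h3
      have heq : x ⬝ᵥ A.mulVec x - -b / a * (x ⬝ᵥ B.mulVec x)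
          = (a * (x ⬝ᵥ A.mulVec x) + b * (x ⬝ᵥ B.mulVec x)) / a := by
        field_simp
        ring
      rw [heq]
      exact div_nonneg h3 hapos.le
    · rw [posSemidef_iff_dotProduct_mulVec]
      constructor
      · rw [Matrix.IsHermitian, conjTranspose_eq_transpose_of_trivial]
        exact (hA.sub (hB.smul _))
      · intro x
        have h3 := hTineq x
        rw [hUeq] at h3
        have hexp : star x ⬝ᵥ (A - (-b / a) • B).mulVec x
            = (x ⬝ᵥ A.mulVec x) - (-b / a) * (x ⬝ᵥ B.mulVec x) := by
          simp [Matrix.sub_mulVec, Matrix.smul_mulVec, dotProduct_sub, dotProduct_smul,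
            smul_eq_mul, star_trivial]
        rw [hexp]
        have : (x ⬝ᵥ A.mulVec x) - (-b / a) * (x ⬝ᵥ B.mulVec x)
            = (a * (x ⬝ᵥ A.mulVec x) + b * (x ⬝ᵥ B.mulVec x)) / a := by
          field_simp
          ring
        rw [this]
        exact div_nonneg h3 hapos.le
  · rintro ⟨lam, hlam, hineq, _⟩ x hgx
    have := hineq x
    nlinarith [mul_nonneg hlam hgx]
end

section
/- Let f = Σ_{i,j=1}^m a_{ij} x_i x_j and g = Σ_{i,j=1}^m b_{ij} x_i x_j be homogeneous quadratic symmetric noncommutative polynomials with real coefficients a_{ij} = a_{ji}, b_{ij} = b_{ji}. Suppose there exist n̂ ∈ ℕ⁺ and a tuple X̂ of m real symmetric n̂×n̂ matrices such that g(X̂) = Σ_{i,j} b_{ij} X̂_i X̂_j is positive definite. Then the following three statements are equivalent: (1) for all X ∈ ℝᵐ, if g(X) ≥ 0 then f(X) ≥ 0; (2) for every n ∈ ℕ⁺ and every tuple X of m real symmetric n×n matrices, if Σ_{i,j} b_{ij} X_i X_j ⪰ 0 then Σ_{i,j} a_{ij} X_i X_j ⪰ 0; (3) there exists λ ≥ 0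 such that Σ_{i,j} (a_{ij} − λ b_{ij}) X_i X_j ⪰ 0 for every n ∈ ℕ⁺ and every tuple X of m real symmetric n×n matrices. -/
open Matrix
open Real

namespace SNC

variable {m : ℕ}

/-- The scalar quadratic form with coefficient array `c`. -/
def qf (c : Fin m → Fin m → ℝ) (x : Fin m → ℝ) : ℝ := ∑ i, ∑ j, c i j * (x i * x j)

/-- The associated bilinear form. -/
def bf (c : Fin m → Fin m → ℝ) (x y : Fin m → ℝ) : ℝ := ∑ i, ∑ j, c i j * (x i * y j)

lemma qf_smul (c : Fin m → Fin m → ℝ) (t : ℝ) (x : Fin m → ℝ) :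
    qf c (t • x) = t ^ 2 * qf c x := by
  simp only [qf, Pi.smul_apply, smul_eq_mul, Finset.mul_sum]
  exact Finset.sum_congr rfl fun i _ => Finset.sum_congr rfl fun j _ => by ring

lemma bf_comm {c : Fin m → Fin m → ℝ} (hc : ∀ i j, c i j = c j i) (x y : Fin m → ℝ) :
    ∑ i, ∑ j, c i j * (y i * x j) = bf c x y := by
  rw [Finset.sum_comm]
  exact Finset.sum_congr rfl fun i _ => Finset.sum_congr rfl fun j _ => by rw [hc i j]; ring

lemma qf_expand {c : Fin m → Fin m → ℝ} (hc : ∀ i j, c i j = c j i) (α β : ℝ)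
    (x y : Fin m → ℝ) :
    qf c (α • x + β • y)
      = α ^ 2 * qf c x + 2 * α * β * bf c x y + β ^ 2 * qf c y := by
  have h1 : ∀ i j : Fin m, c i j * ((α * x i + β * y i) * (α * x j + β * y j)) =
      α ^ 2 * (c i j * (x i * x j)) + (α * β) * (c i j * (x i * y j))
        + (α * β) * (c i j * (y i * x j)) + β ^ 2 * (c i j * (y i * y j)) :=
    fun i j => by ring
  simp only [qf, Pi.add_apply, Pi.smul_apply, smul_eq_mul, h1, Finset.sum_add_distrib,
    ← Finset.mul_sum]
  rw [show (∑ i, ∑ j, c i j * (y i * x j)) = bf c x y from bf_comm hc x y]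
  show _ = α ^ 2 * (∑ i, ∑ j, c i j * (x i * x j)) + 2*α*β* bf c x y
    + β ^ 2 * (∑ i, ∑ j, c i j * (y i * y j))
  rw [show bf c x y = ∑ i, ∑ j, c i j * (x i * y j) from rfl]
  ring

lemma qf_circle {c : Fin m → Fin m → ℝ} (hc : ∀ i j, c i j = c j i) (x y : Fin m → ℝ)
    (s : ℝ) :
    qf c (Real.cos (s/2) • x + Real.sin (s/2) • y)
      = (qf c x + qf c y)/2 + Real.cos s * ((qf c x - qf c y)/2)
        + Real.sin s * bf c x y := by
  rw [qf_expand hc]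
  have h1 : Real.cos (s/2) ^ 2 = 1/2 + Real.cos (2 * (s/2))/2 := Real.cos_sq (s/2)
  have h2 : Real.sin (s/2) ^ 2 = 1 - Real.cos (s/2) ^ 2 := Real.sin_sq (s/2)
  have h3 : Real.sin (2 * (s/2)) = 2 * Real.sin (s/2) * Real.cos (s/2) :=
    Real.sin_two_mul (s/2)
  rw [show (2 : ℝ) * (s/2) = s by ring] at h1 h3
  linear_combination (qf c x) * h1 + (qf c y) * h2 - (qf c y) * h1 - (bf c x y) * h3

lemma exists_cos_sin {p q : ℝ} (h : p ^ 2 + q ^ 2 = 1) :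
    ∃ s : ℝ, Real.cos s = p ∧ Real.sin s = q := by
  have hp1 : -1 ≤ p := by nlinarith
  have hp2 : p ≤ 1 := by nlinarith
  have hs : Real.sin (Real.arccos p) = |q| := by
    rw [Real.sin_arccos, show 1 - p ^ 2 = q ^ 2 by linarith, Real.sqrt_sq_eq_abs]
  rcases le_or_gt 0 q with hq | hq
  · exact ⟨Real.arccos p, Real.cos_arccos hp1 hp2, by rw [hs, abs_of_nonneg hq]⟩
  · exact ⟨-Real.arccos p, by rw [Real.cos_neg]; exact Real.cos_arccos hp1 hp2,
      by rw [Real.sin_neg, hs, abs_of_neg hq]; ring⟩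


lemma exists_ge_one_sq (A B : ℝ) (hA : A ≠ 0) : ∃ T : ℝ, 1 ≤ T ∧ 1 ≤ (A * T + B) ^ 2 := by
  have hA' : 0 < |A| := abs_pos.mpr hA
  refine ⟨(1 + |B|) / |A| + 1, ?_, ?_⟩
  · have : 0 ≤ (1 + |B|) / |A| := by positivity
    linarith
  · have hT0 : (0:ℝ) ≤ (1 + |B|) / |A| + 1 := by positivity
    have hAT : |A| * ((1 + |B|) / |A| + 1) = 1 + |B| + |A| := by field_simp
    have habs : |A * ((1 + |B|) / |A| + 1)| = |A| * ((1 + |B|) / |A| + 1) := by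
      rw [abs_mul, abs_of_nonneg hT0]
    have h2 : |A * ((1 + |B|) / |A| + 1)| ≤ |A * ((1 + |B|) / |A| + 1) + B| + |B| := by
      calc |A * ((1 + |B|) / |A| + 1)| = |(A * ((1 + |B|) / |A| + 1) + B) + (-B)| := by ring_nf
        _ ≤ |A * ((1 + |B|) / |A| + 1) + B| + |-B| := abs_add_le _ _
        _ = |A * ((1 + |B|) / |A| + 1) + B| + |B| := by rw [abs_neg]
    have h3 : 1 ≤ |A * ((1 + |B|) / |A| + 1) + B| := by rw [habs, hAT] at h2; linarith
    nlinarith [sq_abs (A * ((1 + |B|) / |A| + 1) + B)]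

lemma key_real (m1 m2 d1 d2 e1 e2 u : ℝ) (hu1 : -1 ≤ u) (hu2 : u ≤ 1) :
    (m1 + u*d1 = 0 ∧ m2 + u*d2 = 0) ∨
    ∃ t s : ℝ, 0 < t ∧ m1 + u*d1 = t * (m1 + Real.cos s * d1 + Real.sin s * e1)
      ∧ m2 + u*d2 = t * (m2 + Real.cos s * d2 + Real.sin s * e2) := by
  by_cases hdet : d1 * e2 - d2 * e1 = 0
  · right
    by_cases hz1 : d1 = 0
    · by_cases hz2 : d2 = 0
      · refine ⟨1, 0, one_pos, ?_, ?_⟩ <;> simp [hz1, hz2]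
      · have he1 : e1 = 0 := by
          have h : d2 * e1 = 0 := by linear_combination hz1 * e2 - hdet
          rcases mul_eq_zero.mp h with h | h
          exacts [absurd h hz2, h]
        obtain ⟨s, _, hs⟩ : ∃ s ∈ Set.Icc 0 π, Real.cos s + (e2/d2) * Real.sin s = u := by
          have hcont : ContinuousOn (fun s => Real.cos s + (e2/d2) * Real.sin s)
            (Set.Icc 0 π) := by fun_prop
          have hmem : u ∈ Set.Icc (Real.cos π + (e2/d2) * Real.sin π)
              (Real.cos 0 + (e2/d2) * Real.sin 0) := by
            simpa using ⟨hu1, hu2⟩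
          obtain ⟨s, hsm, hs⟩ := intermediate_value_Icc' (le_of_lt Real.pi_pos) hcont hmem
          exact ⟨s, hsm, hs⟩
        have hd : e2/d2*d2 = e2 := div_mul_cancel₀ e2 hz2
        refine ⟨1, s, one_pos, by simp [hz1, he1], ?_⟩
        linear_combination -d2 * hs + Real.sin s * hd
    · have hce2 : e2 = (e1/d1) * d2 := by
        rw [div_mul_eq_mul_div, eq_div_iff hz1]
        linear_combination hdet
      have hce1 : e1 = (e1/d1) * d1 := (div_mul_cancel₀ e1 hz1).symm
      obtain ⟨s, _, hs⟩ : ∃ s ∈ Set.Icc 0 π, Real.cos s + (e1/d1) * Real.sin s = u := by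
        have hcont : ContinuousOn (fun s => Real.cos s + (e1/d1) * Real.sin s)
          (Set.Icc 0 π) := by fun_prop
        have hmem : u ∈ Set.Icc (Real.cos π + (e1/d1) * Real.sin π)
            (Real.cos 0 + (e1/d1) * Real.sin 0) := by
          simpa using ⟨hu1, hu2⟩
        obtain ⟨s, hsm, hs⟩ := intermediate_value_Icc' (le_of_lt Real.pi_pos) hcont hmem
        exact ⟨s, hsm, hs⟩
      refine ⟨1, s, one_pos, ?_, ?_⟩
      · rw [hce1]; linear_combination -d1 * hs
      · rw [hce2]; linear_combination -d2 * hs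
  · by_cases hp : m1 + u*d1 = 0 ∧ m2 + u*d2 = 0
    · exact Or.inl hp
    · right
      have hA12 : ((m1+u*d1)*e2 - (m2+u*d2)*e1) ≠ 0 ∨ (d1*(m2+u*d2) - d2*(m1+u*d1)) ≠ 0 := by
        by_contra hcon
        push_neg at hcon
        obtain ⟨hc1, hc2⟩ := hcon
        have hp1z : (d1*e2 - d2*e1) * (m1+u*d1) = 0 := by
          linear_combination d1 * hc1 + e1 * hc2
        have hp2z : (d1*e2 - d2*e1) * (m2+u*d2) = 0 := by
          linear_combination d2 * hc1 + e2 * hc2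
        exact hp ⟨by rcases mul_eq_zero.mp hp1z with h | h; exacts [absurd h hdet, h],
          by rcases mul_eq_zero.mp hp2z with h | h; exacts [absurd h hdet, h]⟩
      have cramer : ∀ t : ℝ, ((((t)*(m1+u*d1) - m1)*e2 - ((t)*(m2+u*d2) - m2)*e1)/(d1*e2 - d2*e1)) * d1 + ((d1*((t)*(m2+u*d2) - m2) - d2*((t)*(m1+u*d1) - m1))/(d1*e2 - d2*e1)) * e1 = t*(m1+u*d1) - m1 ∧
          ((((t)*(m1+u*d1) - m1)*e2 - ((t)*(m2+u*d2) - m2)*e1)/(d1*e2 - d2*e1)) * d2 + ((d1*((t)*(m2+u*d2) - m2) - d2*((t)*(m1+u*d1) - m1))/(d1*e2 - d2*e1)) * e2 = t*(m2+u*d2) - m2 := by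
        intro t
        constructor <;> · field_simp; ring
      have alt : ∀ t : ℝ, ((((t)*(m1+u*d1) - m1)*e2 - ((t)*(m2+u*d2) - m2)*e1)/(d1*e2 - d2*e1)) = (((m1+u*d1)*e2 - (m2+u*d2)*e1)/(d1*e2 - d2*e1)) * t
          + ((m2*e1 - m1*e2)/(d1*e2 - d2*e1)) := by
        intro t; field_simp; ring
      have bet : ∀ t : ℝ, ((d1*((t)*(m2+u*d2) - m2) - d2*((t)*(m1+u*d1) - m1))/(d1*e2 - d2*e1)) = ((d1*(m2+u*d2) - d2*(m1+u*d1))/(d1*e2 - d2*e1)) * t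
          + ((d2*m1 - d1*m2)/(d1*e2 - d2*e1)) := by
        intro t; field_simp; ring
      have hbig : ∃ T : ℝ, 1 ≤ T ∧ 1 ≤ ((((T)*(m1+u*d1) - m1)*e2 - ((T)*(m2+u*d2) - m2)*e1)/(d1*e2 - d2*e1)) ^ 2 + ((d1*((T)*(m2+u*d2) - m2) - d2*((T)*(m1+u*d1) - m1))/(d1*e2 - d2*e1)) ^ 2 := by
        rcases hA12 with hA | hA
        · have hA' : ((m1+u*d1)*e2 - (m2+u*d2)*e1)/(d1*e2 - d2*e1) ≠ 0 := div_ne_zero hA hdet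
          obtain ⟨T, hT1, hT2⟩ := exists_ge_one_sq _ ((m2*e1 - m1*e2)/(d1*e2 - d2*e1)) hA'
          exact ⟨T, hT1, by rw [alt T]; nlinarith [sq_nonneg ((d1*((T)*(m2+u*d2) - m2) - d2*((T)*(m1+u*d1) - m1))/(d1*e2 - d2*e1))]⟩
        · have hA' : (d1*(m2+u*d2) - d2*(m1+u*d1))/(d1*e2 - d2*e1) ≠ 0 := div_ne_zero hA hdet
          obtain ⟨T, hT1, hT2⟩ := exists_ge_one_sq _ ((d2*m1 - d1*m2)/(d1*e2 - d2*e1)) hA'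
          exact ⟨T, hT1, by rw [bet T]; nlinarith [sq_nonneg ((((T)*(m1+u*d1) - m1)*e2 - ((T)*(m2+u*d2) - m2)*e1)/(d1*e2 - d2*e1))]⟩
      obtain ⟨T, hT1, hT2⟩ := hbig
      have hg1 : ((((1)*(m1+u*d1) - m1)*e2 - ((1)*(m2+u*d2) - m2)*e1)/(d1*e2 - d2*e1)) ^ 2 + ((d1*((1)*(m2+u*d2) - m2) - d2*((1)*(m1+u*d1) - m1))/(d1*e2 - d2*e1)) ^ 2 ≤ 1 := by
        have ha1 : ((((1)*(m1+u*d1) - m1)*e2 - ((1)*(m2+u*d2) - m2)*e1)/(d1*e2 - d2*e1)) = u := by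
          rw [show ((1:ℝ)*(m1+u*d1) - m1)*e2 - ((1:ℝ)*(m2+u*d2) - m2)*e1
              = u*(d1*e2 - d2*e1) by ring]
          exact mul_div_cancel_right₀ u hdet
        have hb1 : ((d1*((1)*(m2+u*d2) - m2) - d2*((1)*(m1+u*d1) - m1))/(d1*e2 - d2*e1)) = 0 := by
          rw [show d1*((1:ℝ)*(m2+u*d2) - m2) - d2*((1:ℝ)*(m1+u*d1) - m1) = 0 by ring, zero_div]
        rw [ha1, hb1]; nlinarith
      have hcont : ContinuousOn (fun t : ℝ => ((((t)*(m1+u*d1) - m1)*e2 - ((t)*(m2+u*d2) - m2)*e1)/(d1*e2 - d2*e1)) ^ 2 + ((d1*((t)*(m2+u*d2) - m2) - d2*((t)*(m1+u*d1) - m1))/(d1*e2 - d2*e1)) ^ 2)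
          (Set.Icc 1 T) := by fun_prop
      obtain ⟨t, htmem, hteq⟩ := intermediate_value_Icc hT1 hcont ⟨hg1, hT2⟩
      have ht1 : (1:ℝ) ≤ t := htmem.1
      have ht0 : (0:ℝ) < t := lt_of_lt_of_le one_pos ht1
      have hteq' : ((((t)*(m1+u*d1) - m1)*e2 - ((t)*(m2+u*d2) - m2)*e1)/(d1*e2 - d2*e1)) ^ 2 + ((d1*((t)*(m2+u*d2) - m2) - d2*((t)*(m1+u*d1) - m1))/(d1*e2 - d2*e1)) ^ 2 = 1 := hteq
      obtain ⟨s, hcs, hss⟩ := exists_cos_sin hteq'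
      have htne : t ≠ 0 := ne_of_gt ht0
      refine ⟨1/t, s, by positivity, ?_, ?_⟩
      · rw [hcs, hss]
        have hcr := (cramer t).1
        rw [show m1 + ((((t)*(m1+u*d1) - m1)*e2 - ((t)*(m2+u*d2) - m2)*e1)/(d1*e2 - d2*e1)) * d1 + ((d1*((t)*(m2+u*d2) - m2) - d2*((t)*(m1+u*d1) - m1))/(d1*e2 - d2*e1)) * e1 = t * (m1+u*d1) from by
          linear_combination hcr]
        rw [one_div, inv_mul_cancel_left₀ htne]
      · rw [hcs, hss]
        have hcr := (cramer t).2
        rw [show m2 + ((((t)*(m1+u*d1) - m1)*e2 - ((t)*(m2+u*d2) - m2)*e1)/(d1*e2 - d2*e1)) * d2 + ((d1*((t)*(m2+u*d2) - m2) - d2*((t)*(m1+u*d1) - m1))/(d1*e2 - d2*e1)) * e2 = t * (m2+u*d2) from by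
          linear_combination hcr]
        rw [one_div, inv_mul_cancel_left₀ htne]

/-- Dines' theorem, pointwise form. -/
lemma dines {a b : Fin m → Fin m → ℝ} (ha : ∀ i j, a i j = a j i) (hb : ∀ i j, b i j = b j i)
    (x y : Fin m → ℝ) {θ : ℝ} (h0 : 0 ≤ θ) (h1 : θ ≤ 1) :
    ∃ z, qf a z = θ * qf a x + (1-θ) * qf a y ∧ qf b z = θ * qf b x + (1-θ) * qf b y := by
  have hu1 : -1 ≤ 2*θ - 1 := by linarith
  have hu2 : 2*θ - 1 ≤ 1 := by linarith
  rcases key_real ((qf a x + qf a y)/2) ((qf b x + qf b y)/2) ((qf a x - qf a y)/2)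
      ((qf b x - qf b y)/2) (bf a x y) (bf b x y) _ hu1 hu2 with h | ⟨t, s, ht, h1', h2'⟩
  · refine ⟨0, ?_, ?_⟩
    · have hz : qf a (0 : Fin m → ℝ) = 0 := by simp [qf]
      rw [hz]; linarith [h.1]
    · have hz : qf b (0 : Fin m → ℝ) = 0 := by simp [qf]
      rw [hz]; linarith [h.2]
  · refine ⟨Real.sqrt t • (Real.cos (s/2) • x + Real.sin (s/2) • y), ?_, ?_⟩
    · rw [qf_smul, qf_circle ha, Real.sq_sqrt (le_of_lt ht)]
      linear_combination -h1'
    · rw [qf_smul, qf_circle hb, Real.sq_sqrt (le_of_lt ht)]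
      linear_combination -h2'

lemma convexD {a b : Fin m → Fin m → ℝ} (ha : ∀ i j, a i j = a j i)
    (hb : ∀ i j, b i j = b j i) :
    Convex ℝ {p : ℝ × ℝ | ∃ x : Fin m → ℝ, p = (qf b x, qf a x)} := by
  rintro p ⟨x, rfl⟩ q ⟨y, rfl⟩ s t hs ht hst
  obtain ⟨z, hza, hzb⟩ := dines ha hb x y hs (by linarith : s ≤ 1)
  have h1t : 1 - s = t := by linarith
  refine ⟨z, ?_⟩
  rw [Prod.ext_iff]
  constructor
  · simp only [Prod.fst_add, Prod.smul_fst, smul_eq_mul]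
    rw [hzb, h1t]
  · simp only [Prod.snd_add, Prod.smul_snd, smul_eq_mul]
    rw [hza, h1t]

lemma posSemidef_sum {ι : Type*} (s : Finset ι) {n : ℕ} (f : ι → Matrix (Fin n) (Fin n) ℝ)
    (h : ∀ i ∈ s, (f i).PosSemidef) : (∑ i ∈ s, f i).PosSemidef := by
  classical
  refine Finset.sum_induction f _ (fun A B hA hB => hA.add hB) ?_ h
  exact ⟨Matrix.isHermitian_zero, fun x => by simp⟩

/-- Sum-of-squares representation: a scalar-PSD symmetric coefficient array gives a PSD
matrix polynomial value at every symmetric tuple. -/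
lemma sos_psd {c : Fin m → Fin m → ℝ} (hc : ∀ i j, c i j = c j i)
    (hq : ∀ x : Fin m → ℝ, 0 ≤ qf c x) (n : ℕ)
    (X : Fin m → Matrix (Fin n) (Fin n) ℝ) (hX : ∀ i, (X i).IsSymm) :
    (∑ i, ∑ j, c i j • (X i * X j)).PosSemidef := by
  classical
  have hCps : (Matrix.of c : Matrix (Fin m) (Fin m) ℝ).PosSemidef := by
    refine .of_dotProduct_mulVec_nonneg ?_ ?_
    · ext i j
      simp only [Matrix.conjTranspose_apply, Matrix.of_apply, star_trivial]
      exact hc j i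
    · intro v
      have hdot : star v ⬝ᵥ (Matrix.of c : Matrix (Fin m) (Fin m) ℝ) *ᵥ v
          = ∑ i, ∑ j, c i j * (v i * v j) := by
        simp only [star_trivial, dotProduct, Matrix.mulVec, Matrix.of_apply,
          Finset.mul_sum]
        exact Finset.sum_congr rfl fun i _ => Finset.sum_congr rfl fun j _ => by ring
      rw [hdot]; exact hq v
  obtain ⟨S, hSsa, -, hSS⟩ := open scoped MatrixOrder in
    CFC.exists_sqrt_of_isSelfAdjoint_of_quasispectrumRestricts hCps.isHermitian
      (QuasispectrumRestricts.nnreal_of_nonneg hCps.nonneg)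
  have hSS : S * S = Matrix.of c := hSS
  have hSsymm : ∀ i j, S i j = S j i := fun i j => by
    have := (show S.IsHermitian from hSsa).apply i j
    simpa using this.symm
  have key : (∑ i, ∑ j, c i j • (X i * X j))
      = ∑ k, (∑ i, S k i • X i) * (∑ j, S k j • X j) := by
    symm
    calc ∑ k, (∑ i, S k i • X i) * (∑ j, S k j • X j)
        = ∑ k, ∑ i, ∑ j, (S k i * S k j) • (X i * X j) := by
          refine Finset.sum_congr rfl fun k _ => ?_
          rw [Finset.sum_mul_sum]
          exact Finset.sum_congr rfl fun i _ => Finset.sum_congr rfl fun j _ =>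
            smul_mul_smul_comm (S k i) (X i) (S k j) (X j)
      _ = ∑ i, ∑ j, (∑ k, S k i * S k j) • (X i * X j) := by
          rw [Finset.sum_comm]
          refine Finset.sum_congr rfl fun i _ => ?_
          rw [Finset.sum_comm]
          exact Finset.sum_congr rfl fun j _ => (Finset.sum_smul).symm
      _ = ∑ i, ∑ j, c i j • (X i * X j) := by
          refine Finset.sum_congr rfl fun i _ => Finset.sum_congr rfl fun j _ => ?_
          congr 1
          have h1 : (∑ k, S k i * S k j) = (S * S) i j := by
            rw [Matrix.mul_apply]
            exact Finset.sum_congr rfl fun k _ => by rw [hSsymm k i]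
          rw [h1, hSS, Matrix.of_apply]
  rw [key]
  apply posSemidef_sum
  intro k _
  have hY : (∑ i, S k i • X i)ᴴ = (∑ i, S k i • X i) := by
    rw [Matrix.conjTranspose_eq_transpose_of_trivial, Matrix.transpose_sum]
    exact Finset.sum_congr rfl fun i _ => by rw [Matrix.transpose_smul, (hX i).eq]
  have h2 := Matrix.posSemidef_conjTranspose_mul_self (∑ i, S k i • X i)
  rwa [hY] at h2

lemma psd_smul {n : ℕ} {A : Matrix (Fin n) (Fin n) ℝ} (hA : A.PosSemidef) {t : ℝ}
    (ht : 0 ≤ t) : (t • A).PosSemidef := by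
  refine .of_dotProduct_mulVec_nonneg ?_ ?_
  · show (t • A)ᴴ = t • A
    rw [Matrix.conjTranspose_eq_transpose_of_trivial, Matrix.transpose_smul,
      ← Matrix.conjTranspose_eq_transpose_of_trivial, hA.1]
  · intro x
    rw [Matrix.smul_mulVec, dotProduct_smul]
    exact mul_nonneg ht (hA.dotProduct_mulVec_nonneg x)

lemma one_one_psd {t : ℝ} (ht : 0 ≤ t) :
    (t • (1 : Matrix (Fin 1) (Fin 1) ℝ)).PosSemidef :=
  psd_smul (Matrix.PosSemidef.one) ht

lemma one_one_psd_iff {t : ℝ} (h : (t • (1 : Matrix (Fin 1) (Fin 1) ℝ)).PosSemidef) :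
    0 ≤ t := by
  have := h.dotProduct_mulVec_nonneg (fun _ => 1)
  simpa [dotProduct, Matrix.mulVec, Matrix.one_apply] using this

/-- The homogeneous S-lemma for scalar quadratic forms. -/
lemma slemma {a b : Fin m → Fin m → ℝ} (ha : ∀ i j, a i j = a j i)
    (hb : ∀ i j, b i j = b j i) (hslater : ∃ x0, 0 < qf b x0)
    (h1 : ∀ x, 0 ≤ qf b x → 0 ≤ qf a x) :
    ∃ lam : ℝ, 0 ≤ lam ∧ ∀ x, 0 ≤ qf a x - lam * qf b x := by
  classical
  have hDconv : Convex ℝ {p : ℝ × ℝ | ∃ x : Fin m → ℝ, p = (qf b x, qf a x)} := convexD ha hb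
  have hSconv : Convex ℝ ((Set.Ioi (0:ℝ)) ×ˢ (Set.Iio (0:ℝ))) :=
    (convex_Ioi 0).prod (convex_Iio 0)
  have hSopen : IsOpen ((Set.Ioi (0:ℝ)) ×ˢ (Set.Iio (0:ℝ))) :=
    (isOpen_Ioi).prod (isOpen_Iio)
  have hdisj : Disjoint ((Set.Ioi (0:ℝ)) ×ˢ (Set.Iio (0:ℝ)))
      {p : ℝ × ℝ | ∃ x : Fin m → ℝ, p = (qf b x, qf a x)} := by
    rw [Set.disjoint_left]
    rintro p hp ⟨x, rfl⟩
    obtain ⟨hp1, hp2⟩ := hp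
    have := h1 x (le_of_lt hp1)
    exact absurd this (not_le.mpr hp2)
  obtain ⟨f, cst, hfs, hfD⟩ := geometric_hahn_banach_open hSconv hSopen hDconv hdisj
  set α := f (1, 0) with hαdef
  set β := f (0, 1) with hβdef
  have hflin : ∀ u v : ℝ, f (u, v) = u * α + v * β := by
    intro u v
    have hrepr : ((u, v) : ℝ × ℝ) = u • ((1:ℝ), (0:ℝ)) + v • ((0:ℝ), (1:ℝ)) := by
      simp [Prod.ext_iff]
    rw [hrepr, map_add, f.map_smul, f.map_smul, smul_eq_mul, smul_eq_mul]
  have hs' : ∀ u v : ℝ, 0 < u → v < 0 → u * α + v * β < cst := by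
    intro u v hu hv
    have := hfs (u, v) (Set.mem_prod.mpr ⟨hu, hv⟩)
    rwa [hflin] at this
  have hD' : ∀ x, cst ≤ qf b x * α + qf a x * β := by
    intro x
    have := hfD (qf b x, qf a x) ⟨x, rfl⟩
    rwa [hflin] at this
  have hc0 : cst ≤ 0 := by
    have := hfD ((0:ℝ), (0:ℝ)) ⟨0, by simp [qf, Prod.ext_iff]⟩
    rw [hflin] at this; linarith
  have hβ0 : 0 ≤ β := by
    by_contra hcon
    push_neg at hcon
    have hβne : β ≠ 0 := ne_of_lt hcon
    have hvneg : -((|cst| + |α| + 1)/(-β)) < 0 := by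
      have h1' : (0:ℝ) < |cst| + |α| + 1 := by positivity
      have h2' : (0:ℝ) < -β := by linarith
      have := div_pos h1' h2'
      linarith
    have h := hs' 1 (-((|cst| + |α| + 1)/(-β))) one_pos hvneg
    have heq : (-((|cst| + |α| + 1)/(-β))) * β = |cst| + |α| + 1 := by
      rw [div_neg, neg_neg, div_mul_cancel₀ _ hβne]
    rw [heq] at h
    have := neg_abs_le α
    have := le_abs_self cst
    linarith
  have hab : α < β := by
    have := hs' 1 (-1) one_pos (by norm_num)
    linarith
  have hc0' : 0 ≤ cst := by
    by_contra hcon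
    push_neg at hcon
    have hne : α - β < 0 := by linarith
    have ht : 0 < cst/(α - β) := div_pos_of_neg_of_neg hcon hne
    have h := hs' (cst/(α-β)) (-(cst/(α-β))) ht (by linarith)
    have heq : cst/(α-β) * α + (-(cst/(α-β))) * β = cst := by
      have h' : cst/(α-β) * α + (-(cst/(α-β))) * β = cst/(α-β) * (α-β) := by ring
      rw [h', div_mul_cancel₀ _ (ne_of_lt hne)]
    rw [heq] at h
    exact lt_irrefl _ h
  have hα0 : α ≤ 0 := by
    by_contra hcon
    push_neg at hcon
    have hb1 : (0:ℝ) < β + 1 := by linarith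
    have hv' : (0:ℝ) < 1/(2*(β+1)) := div_pos one_pos (by linarith)
    have hu : (0:ℝ) < (|cst| + 1)/α := div_pos (by positivity) hcon
    have h := hs' ((|cst| + 1)/α) (-(1/(2*(β+1)))) hu (by linarith)
    have heq : (|cst| + 1)/α * α = |cst| + 1 := div_mul_cancel₀ _ (ne_of_gt hcon)
    have heq2 : (-(1/(2*(β+1)))) * β = -(β/(2*(β+1))) := by ring
    have hbound : β/(2*(β+1)) ≤ 1/2 := by
      rw [div_le_iff₀ (by linarith : (0:ℝ) < 2*(β+1))]
      linarith
    rw [heq, heq2] at h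
    have := le_abs_self cst
    linarith
  have hβpos : 0 < β := by
    rcases lt_or_eq_of_le hβ0 with h | h
    · exact h
    · exfalso
      have hαneg : α < 0 := by rwa [← h] at hab
      obtain ⟨x0, hx0⟩ := hslater
      have h2' := le_trans hc0' (hD' x0)
      rw [← h] at h2'
      nlinarith
  refine ⟨-α/β, div_nonneg (neg_nonneg.mpr hα0) (le_of_lt hβpos), ?_⟩
  intro x
  have h := le_trans hc0' (hD' x)
  have heq : qf a x - (-α/β) * qf b x = (qf b x * α + qf a x * β)/β := by
    field_simp
    ring
  rw [heq]
  exact div_nonneg h (le_of_lt hβpos)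

end SNC

open SNC

/-- **S-lemma for noncommutative polynomials with real coefficients (Theorem 3.1).**
For `f = ∑ aᵢⱼ xᵢ xⱼ`, `g = ∑ bᵢⱼ xᵢ xⱼ` with real symmetric coefficient arrays, if
`g` is positive definite at some tuple of symmetric matrices, then the scalar S-lemma
condition, the matrix positivity domination condition, and the existence of `λ ≥ 0`
with `f - λ g ⪰ 0` at all symmetric tuples are all equivalent. -/
theorem stmt_1 (m : ℕ) (a b : Fin m → Fin m → ℝ)
    (ha : ∀ i j, a i j = a j i) (hb : ∀ i j, b i j = b j i)
    (hgpos : ∃ (nh : ℕ) (_ : 0 < nh) (Xh : Fin m → Matrix (Fin nh) (Fin nh) ℝ),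
      (∀ i, (Xh i).IsSymm) ∧ (∑ i, ∑ j, b i j • (Xh i * Xh j)).PosDef) :
    List.TFAE [
      (∀ X : Fin m → ℝ,
        0 ≤ ∑ i, ∑ j, b i j * (X i * X j) → 0 ≤ ∑ i, ∑ j, a i j * (X i * X j)),
      (∀ (n : ℕ), 0 < n → ∀ X : Fin m → Matrix (Fin n) (Fin n) ℝ, (∀ i, (X i).IsSymm) →
        (∑ i, ∑ j, b i j • (X i * X j)).PosSemidef →
        (∑ i, ∑ j, a i j • (X i * X j)).PosSemidef),
      (∃ lam : ℝ, 0 ≤ lam ∧ ∀ (n : ℕ), 0 < n →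
        ∀ X : Fin m → Matrix (Fin n) (Fin n) ℝ, (∀ i, (X i).IsSymm) →
        (∑ i, ∑ j, (a i j - lam * b i j) • (X i * X j)).PosSemidef)] := by
  tfae_have 1 → 3
  | h1 => by
    have hslater : ∃ x0 : Fin m → ℝ, 0 < qf b x0 := by
      by_contra hcon
      push_neg at hcon
      obtain ⟨nh, hnh, Xh, hXs, hPD⟩ := hgpos
      have hpsd := sos_psd (c := fun i j => -b i j)
          (fun i j => by show -b i j = -b j i; rw [hb i j])
          (fun x => by
            have hx := hcon x
            have : qf (fun i j => -b i j) x = -qf b x := by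
              simp [qf, Finset.sum_neg_distrib]
            rw [this]; linarith) nh Xh hXs
      have hneg : (∑ i, ∑ j, (fun i j => -b i j) i j • (Xh i * Xh j))
          = -(∑ i, ∑ j, b i j • (Xh i * Xh j)) := by
        simp [neg_smul]
      rw [hneg] at hpsd
      have hv : (fun _ => (1:ℝ) : Fin nh → ℝ) ≠ 0 := by
        intro hveq
        have := congrFun hveq ⟨0, hnh⟩
        simpa using this
      have h1' := hPD.dotProduct_mulVec_pos hv
      have h2' := hpsd.dotProduct_mulVec_nonneg (fun _ => (1:ℝ))
      rw [Matrix.neg_mulVec, dotProduct_neg] at h2'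
      linarith
    obtain ⟨lam, hlam, hineq⟩ := slemma ha hb hslater h1
    refine ⟨lam, hlam, fun n hn X hXs => ?_⟩
    refine sos_psd (c := fun i j => a i j - lam * b i j)
      (fun i j => by show a i j - lam * b i j = a j i - lam * b j i; rw [ha i j, hb i j])
      (fun x => ?_) n X hXs
    have hexp : qf (fun i j => a i j - lam * b i j) x = qf a x - lam * qf b x := by
      simp only [qf, Finset.mul_sum, ← Finset.sum_sub_distrib]
      exact Finset.sum_congr rfl fun i _ => Finset.sum_congr rfl fun j _ => by ring
    rw [hexp]
    exact hineq x
  tfae_have 3 → 2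
  | ⟨lam, hlam, h3⟩, n, hn, X, hXs, hgX => by
    have hid : (∑ i, ∑ j, a i j • (X i * X j))
        = (∑ i, ∑ j, (a i j - lam * b i j) • (X i * X j))
          + lam • (∑ i, ∑ j, b i j • (X i * X j)) := by
      rw [Finset.smul_sum, ← Finset.sum_add_distrib]
      refine Finset.sum_congr rfl fun i _ => ?_
      rw [Finset.smul_sum, ← Finset.sum_add_distrib]
      refine Finset.sum_congr rfl fun j _ => ?_
      rw [smul_smul, ← add_smul]
      congr 1
      ring
    rw [hid]
    exact (h3 n hn X hXs).add (psd_smul hgX hlam)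
  tfae_have 2 → 1
  | h2, X, hXq => by
    have hkey : ∀ c : Fin m → Fin m → ℝ,
        (∑ i, ∑ j, c i j • ((X i • (1 : Matrix (Fin 1) (Fin 1) ℝ)) * (X j • 1)))
          = (∑ i, ∑ j, c i j * (X i * X j)) • (1 : Matrix (Fin 1) (Fin 1) ℝ) := by
      intro c
      rw [Finset.sum_smul]
      refine Finset.sum_congr rfl fun i _ => ?_
      rw [Finset.sum_smul]
      refine Finset.sum_congr rfl fun j _ => ?_
      rw [smul_mul_smul_comm, one_mul, smul_smul]
    have happ := h2 1 one_pos (fun i => X i • (1 : Matrix (Fin 1) (Fin 1) ℝ))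
      (fun i => by
        show (X i • (1 : Matrix (Fin 1) (Fin 1) ℝ))ᵀ = X i • 1
        rw [Matrix.transpose_smul, Matrix.transpose_one])
      (by rw [hkey b]; exact one_one_psd hXq)
    rw [hkey a] at happ
    exact one_one_psd_iff happ
  tfae_finish
end

section
/- Let f(x) = Σ_{i,j=1}^m A_{ij} x_i x_j be a symmetric quadratic homogeneous matrix-valued polynomial with coefficients A_{ij} ∈ ℝ^{q×q} satisfying A_{ij} = A_{ji}ᵀ, and let 𝒜 ∈ ℝ^{(mq)×(mq)} be the block matrix whose (i,j)-th q×q block is A_{ij}. Then f(X) = Σ_{i,j=1}^m A_{ij} ⊗ X_i X_j is positive semidefinite for every n ∈ ℕ⁺ and every tuple X of m real symmetric n×n matrices if and only if 𝒜 is positive semidefinite. -/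
open Matrix Kronecker

private lemma key_quad {m q n : ℕ} (A : Fin m → Fin m → Matrix (Fin q) (Fin q) ℝ)
    (X : Fin m → Matrix (Fin n) (Fin n) ℝ) (hX : ∀ i, (X i).IsSymm)
    (v : Fin q × Fin n → ℝ) :
    v ⬝ᵥ (∑ i, ∑ j, A i j ⊗ₖ (X i * X j)) *ᵥ v
      = ∑ c, (fun ip : Fin m × Fin q => ∑ a, X ip.1 c a * v (ip.2, a)) ⬝ᵥ
          (Matrix.of fun p r : Fin m × Fin q => A p.1 r.1 p.2 r.2) *ᵥ
          (fun jr : Fin m × Fin q => ∑ b, X jr.1 c b * v (jr.2, b)) := by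
  simp only [dotProduct, Matrix.mulVec, Matrix.sum_apply, kroneckerMap_apply, Matrix.mul_apply,
    Fintype.sum_prod_type, Finset.mul_sum, Finset.sum_mul, Matrix.of_apply]
  rw [show (∑ c : Fin n, ∑ i : Fin m, ∑ p : Fin q, ∑ j : Fin m, ∑ r : Fin q, ∑ b : Fin n,
      ∑ a : Fin n, X i c a * v (p, a) * (A i j p r * (X j c b * v (r, b))))
    = ∑ y : Fin n × Fin m × Fin q × Fin m × Fin q × Fin n × Fin n,
      X y.2.1 y.1 y.2.2.2.2.2.2 * v (y.2.2.1, y.2.2.2.2.2.2) *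
        (A y.2.1 y.2.2.2.1 y.2.2.1 y.2.2.2.2.1 *
          (X y.2.2.2.1 y.1 y.2.2.2.2.2.1 * v (y.2.2.2.2.1, y.2.2.2.2.2.1))) from by
    simp [Fintype.sum_prod_type]]
  rw [show (∑ p : Fin q, ∑ a : Fin n, ∑ r : Fin q, ∑ b : Fin n, ∑ i : Fin m, ∑ j : Fin m,
      ∑ c : Fin n, v (p, a) * (A i j p r * (X i a c * X j c b) * v (r, b)))
    = ∑ x : Fin q × Fin n × Fin q × Fin n × Fin m × Fin m × Fin n,
      v (x.1, x.2.1) * (A x.2.2.2.2.1 x.2.2.2.2.2.1 x.1 x.2.2.1 *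
        (X x.2.2.2.2.1 x.2.1 x.2.2.2.2.2.2 * X x.2.2.2.2.2.1 x.2.2.2.2.2.2 x.2.2.2.1) *
          v (x.2.2.1, x.2.2.2.1)) from by simp [Fintype.sum_prod_type]]
  refine Fintype.sum_equiv
    ⟨fun x => (x.2.2.2.2.2.2, x.2.2.2.2.1, x.1, x.2.2.2.2.2.1, x.2.2.1, x.2.2.2.1, x.2.1),
     fun y => (y.2.2.1, y.2.2.2.2.2.2, y.2.2.2.2.1, y.2.2.2.2.2.1, y.2.1, y.2.2.2.1, y.1),
     fun x => rfl, fun y => rfl⟩ _ _ fun x => ?_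
  obtain ⟨p, a, r, b, i, j, c⟩ := x
  have h1 : X i a c = X i c a := (congrFun (congrFun (hX i) a) c).symm
  simp only [Equiv.coe_fn_mk]
  rw [h1]; ring

/-- **Theorem 4.1.** A symmetric quadratic homogeneous matrix-valued polynomial
`f(x) = ∑ Aᵢⱼ xᵢ xⱼ` (with `Aᵢⱼ = Aⱼᵢᵀ ∈ ℝ^{q×q}`) satisfies
`f(X) = ∑ Aᵢⱼ ⊗ Xᵢ Xⱼ ⪰ 0` for every tuple of real symmetric matrices of every size
iff the block coefficient matrix `𝒜 = (Aᵢⱼ)` is positive semidefinite. -/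
theorem stmt_2 (m q : ℕ) (hm : 0 < m) (hq : 0 < q)
    (A : Fin m → Fin m → Matrix (Fin q) (Fin q) ℝ)
    (hA : ∀ i j, A i j = (A j i)ᵀ) :
    (∀ (n : ℕ), 0 < n → ∀ X : Fin m → Matrix (Fin n) (Fin n) ℝ, (∀ i, (X i).IsSymm) →
      (∑ i, ∑ j, A i j ⊗ₖ (X i * X j)).PosSemidef) ↔
    (Matrix.of fun p r : Fin m × Fin q => A p.1 r.1 p.2 r.2).PosSemidef := by
  constructor
  · intro H
    refine Matrix.posSemidef_iff_dotProduct_mulVec.mpr ⟨?_, ?_⟩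
    · -- Hermitian
      ext ⟨i, p⟩ ⟨j, r⟩
      simp only [Matrix.conjTranspose_apply, Matrix.of_apply, star_trivial]
      rw [hA j i]; rfl
    · intro x
      set L : Fin (m + 1) := Fin.last m with hL
      set X : Fin m → Matrix (Fin (m + 1)) (Fin (m + 1)) ℝ := fun i =>
        Matrix.single i.castSucc L 1 + Matrix.single L i.castSucc 1 with hXdef
      have hXsymm : ∀ i, (X i).IsSymm := by
        intro i
        ext a b
        simp only [hXdef, Matrix.transpose_apply, Matrix.add_apply, Matrix.single,
          Matrix.of_apply]
        rw [add_comm]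
        congr 1
        · exact if_congr and_comm rfl rfl
        · exact if_congr and_comm rfl rfl
      set v : Fin q × Fin (m + 1) → ℝ := fun pr =>
        if h : pr.2 = L then 0 else x (pr.2.castPred h, pr.1) with hv
      have h0 := (H (m + 1) (Nat.succ_pos m) X hXsymm).dotProduct_mulVec_nonneg v
      rw [star_trivial, key_quad A X hXsymm v] at h0
      rw [Finset.sum_eq_single L ?_ (by simp)] at h0
      · have hw : (fun ip : Fin m × Fin q => ∑ a, X ip.1 L a * v (ip.2, a)) = x := by
          funext ip
          obtain ⟨i, p⟩ := ip
          have hne : i.castSucc ≠ L := Fin.ne_of_lt (Fin.castSucc_lt_last i)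
          rw [Finset.sum_eq_single i.castSucc ?_ (by simp)]
          · simp [hXdef, hv, hne, Fin.castPred_castSucc]
          · intro a _ ha
            have : X i L a = 0 := by simp [hXdef, hne, Ne.symm ha]
            rw [this, zero_mul]
        rw [hw] at h0
        simpa using h0
      · intro c _ hc
        have hwz : (fun ip : Fin m × Fin q => ∑ a, X ip.1 c a * v (ip.2, a)) = 0 := by
          funext ip
          apply Finset.sum_eq_zero
          intro a _
          by_cases ha : a = L
          · simp [hv, ha]
          · have : X ip.1 c a = 0 := by simp [hXdef, Ne.symm ha, Ne.symm hc]
            rw [this, zero_mul]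
        rw [hwz]
        simp
  · intro h𝒜 n hn X hX
    refine Matrix.posSemidef_iff_dotProduct_mulVec.mpr ⟨?_, ?_⟩
    · -- Hermitian
      ext ⟨p, a⟩ ⟨r, b⟩
      simp only [Matrix.conjTranspose_apply, Matrix.sum_apply, kroneckerMap_apply, star_trivial]
      rw [Finset.sum_comm]
      refine Finset.sum_congr rfl fun j _ => Finset.sum_congr rfl fun i _ => ?_
      rw [hA j i]
      have e : (X j * X i)ᵀ = X i * X j := by rw [Matrix.transpose_mul, hX i, hX j]
      have e2 : (X i * X j) b a = (X j * X i) a b := by rw [← e]; rfl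
      rw [e2]; rfl
    · intro v
      rw [star_trivial, key_quad A X hX v]
      apply Finset.sum_nonneg
      intro c _
      simpa using h𝒜.dotProduct_mulVec_nonneg (fun ip : Fin m × Fin q => ∑ a, X ip.1 c a * v (ip.2, a))
end

section
/- Let f(x) = Σ_{i,j=1}^m A_{ij} x_i x_j be a symmetric quadratic homogeneous matrix-valued polynomial with coefficients A_{ij} ∈ ℝ^{q×q} satisfying A_{ij} = A_{ji}ᵀ. If f(X) = Σ_{i,j=1}^m A_{ij} ⊗ X_i X_j is positive semidefinite for every n ∈ ℕ⁺ and every tuple X of m real symmetric n×n matrices, then there exist matrices U₁,…,U_m ∈ ℝ^{q×(qm)} such that A_{ij} = U_i U_jᵀ for all i,j; consequently, for the linear matrix-valued polynomial U(x) = Σ_{i=1}^m U_i x_i one has f(X) = U(X)U(X)ᵀ, i.e. Σ_{i,j} A_{ij} ⊗ X_i X_j = (Σ_i U_i ⊗ X_i)(Σ_j U_jᵀ ⊗ X_j), for every tuple X of real symmetric matrices. -/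
open Matrix Kronecker

private lemma vmv_mul {n : Type*} [Fintype n] (u v s t : n → ℝ) :
    vecMulVec u v * vecMulVec s t = (v ⬝ᵥ s) • vecMulVec u t := by
  ext i j
  simp only [Matrix.mul_apply, Matrix.vecMulVec_apply, Matrix.smul_apply, dotProduct,
    smul_eq_mul, Finset.sum_mul]
  apply Finset.sum_congr rfl
  intro c _
  ring

private lemma quad_kron {q n : ℕ} (P : Matrix (Fin q) (Fin q) ℝ) (u t : Fin n → ℝ)
    (w : Fin q × Fin n → ℝ) :
    w ⬝ᵥ ((P ⊗ₖ vecMulVec u t) *ᵥ w) =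
      ∑ a, ∑ b, P a b * (∑ k, w (a, k) * u k) * (∑ l, t l * w (b, l)) := by
  simp only [dotProduct, mulVec, kroneckerMap_apply, vecMulVec_apply,
    Fintype.sum_prod_type, dotProduct, Finset.mul_sum, Finset.sum_mul]
  apply Finset.sum_congr rfl
  intro a _
  conv_lhs => rw [Finset.sum_comm]
  apply Finset.sum_congr rfl
  intro b _
  conv_rhs => rw [Finset.sum_comm]
  apply Finset.sum_congr rfl
  intro k _
  apply Finset.sum_congr rfl
  intro l _
  ring

private lemma sum_mulVec' {ι : Type*} {n : Type*} [Fintype n] (s : Finset ι)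
    (M : ι → Matrix n n ℝ) (w : n → ℝ) :
    (∑ i ∈ s, M i) *ᵥ w = ∑ i ∈ s, M i *ᵥ w := by
  ext k
  simp only [mulVec, dotProduct, Matrix.sum_apply, Finset.sum_mul, Finset.sum_apply]
  rw [Finset.sum_comm]

private lemma dotProduct_sum' {ι : Type*} {n : Type*} [Fintype n] (s : Finset ι)
    (w : n → ℝ) (f : ι → n → ℝ) :
    w ⬝ᵥ (∑ i ∈ s, f i) = ∑ i ∈ s, w ⬝ᵥ f i := by
  simp only [dotProduct, Finset.sum_apply, Finset.mul_sum]
  rw [Finset.sum_comm]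

/-- **Factorization of globally positive semidefinite symmetric quadratic homogeneous
matrix-valued polynomials.** If `f(X) = ∑ Aᵢⱼ ⊗ Xᵢ Xⱼ ⪰ 0` for every tuple of real
symmetric matrices of every size, then there are `Uᵢ ∈ ℝ^{q×(qm)}` with `Aᵢⱼ = Uᵢ Uⱼᵀ`,
so that `f(X) = U(X) U(X)ᵀ` where `U(x) = ∑ Uᵢ xᵢ`. -/
theorem stmt_3 (m q : ℕ) (hm : 0 < m) (hq : 0 < q)
    (A : Fin m → Fin m → Matrix (Fin q) (Fin q) ℝ)
    (hA : ∀ i j, A i j = (A j i)ᵀ)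
    (hpsd : ∀ (n : ℕ), 0 < n → ∀ X : Fin m → Matrix (Fin n) (Fin n) ℝ, (∀ i, (X i).IsSymm) →
      (∑ i, ∑ j, A i j ⊗ₖ (X i * X j)).PosSemidef) :
    ∃ U : Fin m → Matrix (Fin q) (Fin q × Fin m) ℝ,
      (∀ i j, A i j = U i * (U j)ᵀ) ∧
      ∀ (n : ℕ) (X : Fin m → Matrix (Fin n) (Fin n) ℝ), (∀ i, (X i).IsSymm) →
        ∑ i, ∑ j, A i j ⊗ₖ (X i * X j) =
          (∑ i, U i ⊗ₖ X i) * (∑ j, (U j)ᵀ ⊗ₖ X j) := by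
  classical
  -- The big block coefficient matrix
  set B : Matrix (Fin q × Fin m) (Fin q × Fin m) ℝ := fun p r => A p.2 r.2 p.1 r.1 with hBdef
  have hBpsd : B.PosSemidef := by
    refine posSemidef_iff_dotProduct_mulVec.mpr ?_
    constructor
    · ext p r
      have := congrArg (fun M => M p.1 r.1) (hA p.2 r.2)
      simp only [transpose_apply] at this
      simp only [conjTranspose_apply, hBdef, star_trivial]
      exact (this.symm)
    · intro v
      -- Test matrices in dimension m+1
      set e0 : Fin (m+1) → ℝ := Pi.single 0 1 with he0
      set e : Fin m → Fin (m+1) → ℝ := fun i => Pi.single i.succ 1 with he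
      set X : Fin m → Matrix (Fin (m+1)) (Fin (m+1)) ℝ :=
        fun i => vecMulVec e0 (e i) + vecMulVec (e i) e0 with hX
      have hXsym : ∀ i, (X i).IsSymm := by
        intro i
        unfold Matrix.IsSymm
        ext k l
        simp [hX, vecMulVec_apply, mul_comm]
        ring
      have h1 : ∀ i : Fin m, e i ⬝ᵥ e0 = 0 := by
        intro i
        simp [he, he0, single_dotProduct, Pi.single_apply, (Fin.succ_ne_zero i)]
      have h3 : ∀ j : Fin m, e0 ⬝ᵥ e j = 0 := by
        intro j
        simp [he, he0, single_dotProduct, Pi.single_apply, (Fin.succ_ne_zero j).symm]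
      have h0 : e0 ⬝ᵥ e0 = 1 := by simp [he0, single_dotProduct, Pi.single_apply]
      have h2 : ∀ i j : Fin m, e i ⬝ᵥ e j = if i = j then 1 else 0 := by
        intro i j
        simp [he, single_dotProduct, Pi.single_apply, Fin.succ_inj, eq_comm]
      have hXX : ∀ i j, X i * X j =
          (if i = j then (1:ℝ) else 0) • vecMulVec e0 e0 + vecMulVec (e i) (e j) := by
        intro i j
        rw [hX]
        simp only [add_mul, mul_add, vmv_mul, h1 i, h2 i j, h0, h3 j, zero_smul, one_smul,
          add_zero, zero_add]
        abel
      -- the test vector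
      set w : Fin q × Fin (m+1) → ℝ := fun p => Fin.cases 0 (fun i => v (p.1, i)) p.2 with hw
      have hsum0 : ∀ a : Fin q, (∑ k, w (a, k) * e0 k) = 0 := by
        intro a
        rw [show (∑ k, w (a, k) * e0 k) = (fun k => w (a,k)) ⬝ᵥ e0 from rfl, dotProduct_single]
        simp [hw]
      have hsumi : ∀ (a : Fin q) (i : Fin m), (∑ k, w (a, k) * e i k) = v (a, i) := by
        intro a i
        rw [show (∑ k, w (a, k) * e i k) = (fun k => w (a,k)) ⬝ᵥ e i from rfl, dotProduct_single]
        simp [hw]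
      have hsumi' : ∀ (b : Fin q) (j : Fin m), (∑ l, e j l * w (b, l)) = v (b, j) := by
        intro b j
        rw [show (∑ l, e j l * w (b, l)) = e j ⬝ᵥ (fun l => w (b,l)) from rfl, single_dotProduct]
        simp [hw]
      have h := (posSemidef_iff_dotProduct_mulVec.mp (hpsd (m+1) (Nat.succ_pos m) X hXsym)).2 w
      rw [star_trivial] at h
      rw [sum_mulVec', dotProduct_sum'] at h
      have hterm : ∀ i : Fin m, w ⬝ᵥ ((∑ j, A i j ⊗ₖ (X i * X j)) *ᵥ w)
          = ∑ j, ∑ a, ∑ b, A i j a b * v (a, i) * v (b, j) := by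
        intro i
        rw [sum_mulVec', dotProduct_sum']
        apply Finset.sum_congr rfl
        intro j _
        rw [hXX i j, kronecker_add, kronecker_smul, add_mulVec, smul_mulVec,
          dotProduct_add, dotProduct_smul, quad_kron, quad_kron]
        simp only [hsum0, hsumi, hsumi', mul_zero, zero_mul, Finset.sum_const_zero,
          smul_eq_mul, mul_zero, add_zero, zero_add]
      simp only [hterm] at h
      have hquad : v ⬝ᵥ B *ᵥ v = ∑ i, ∑ j, ∑ a, ∑ b, A i j a b * v (a, i) * v (b, j) := by
        simp only [dotProduct, mulVec, dotProduct, Fintype.sum_prod_type, hBdef,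
          Finset.mul_sum]
        calc (∑ a, ∑ i, ∑ b, ∑ j, v (a,i) * (A i j a b * v (b,j)))
            = ∑ i, ∑ a, ∑ b, ∑ j, v (a,i) * (A i j a b * v (b,j)) := Finset.sum_comm
          _ = ∑ i, ∑ a, ∑ j, ∑ b, v (a,i) * (A i j a b * v (b,j)) :=
              Finset.sum_congr rfl fun i _ => Finset.sum_congr rfl fun a _ => Finset.sum_comm
          _ = ∑ i, ∑ j, ∑ a, ∑ b, v (a,i) * (A i j a b * v (b,j)) :=
              Finset.sum_congr rfl fun i _ => Finset.sum_comm
          _ = ∑ i, ∑ j, ∑ a, ∑ b, A i j a b * v (a, i) * v (b, j) := by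
              apply Finset.sum_congr rfl; intro i _
              apply Finset.sum_congr rfl; intro j _
              apply Finset.sum_congr rfl; intro a _
              apply Finset.sum_congr rfl; intro b _
              ring
      rw [star_trivial, hquad]
      exact h
  -- Factor B
  obtain ⟨D, hD⟩ := (show ∃ D : Matrix (Fin q × Fin m) (Fin q × Fin m) ℝ, B = Dᴴ * D by
    open scoped MatrixOrder in
    obtain ⟨D, hD⟩ := CStarAlgebra.nonneg_iff_eq_star_mul_self.mp hBpsd.nonneg
    exact ⟨D, by rw [hD, star_eq_conjTranspose]⟩)
  set U : Fin m → Matrix (Fin q) (Fin q × Fin m) ℝ := fun i => fun a c => D c (a, i) with hUdef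
  have hU : ∀ i j, A i j = U i * (U j)ᵀ := by
    intro i j
    ext a b
    have := congrArg (fun M => M (a, i) (b, j)) hD
    simp only [mul_apply, conjTranspose_apply, star_trivial, hBdef] at this
    rw [this, mul_apply]
    rfl
  refine ⟨U, hU, ?_⟩
  intro n X hXs
  rw [Matrix.sum_mul]
  simp only [Matrix.mul_sum]
  apply Finset.sum_congr rfl
  intro i _
  apply Finset.sum_congr rfl
  intro j _
  rw [← mul_kronecker_mul, ← hU]
end

section
/- Let A_{ij}, B_{ij} ∈ ℝ^{q×q} with A_{ij} = A_{ji}ᵀ and B_{ij} = B_{ji}ᵀ for 1 ≤ i,j ≤ m, and let 𝒜 be the block matrix in ℝ^{(mq)×(mq)} with (i,j)-th block A_{ij}. Suppose (i) there exist n̂ ∈ ℕ⁺ and real symmetric n̂×n̂ matrices X̂₁,…,X̂_m with Σ_{i,j} B_{ij} ⊗ X̂_i X̂_j positive definite, and (ii) for every completely positive linear map φ : ℝ^{q×q} → ℝ^{q×q}, the block matrix with (i,j)-th block A_{ij} − φ(B_{ij}) is not positive semidefinite. Then there exists a positive semidefinite matrix M ∈ ℝ^{(mq)×(mq)}, with q×q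 blocks M_{ij}, such that ⟨𝒜, M⟩ = Σ_{i,j} ⟨A_{ij}, M_{ij}⟩ < 0 and Σ_{i,j=1}^m B_{ij} ⊗ M_{ij} ⪰ 0. -/
open Matrix Kronecker

/-- The extension `φ ⊗ 1ₙ` of a linear map `φ : ℝ^{q×q} → ℝ^{q×q}` to
`ℝ^{(qn)×(qn)}`, determined by `(φ ⊗ 1ₙ)(S ⊗ T) = φ(S) ⊗ T`. -/
def kronExt {q : ℕ} (φ : Matrix (Fin q) (Fin q) ℝ →ₗ[ℝ] Matrix (Fin q) (Fin q) ℝ) (n : ℕ)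
    (M : Matrix (Fin q × Fin n) (Fin q × Fin n) ℝ) : Matrix (Fin q × Fin n) (Fin q × Fin n) ℝ :=
  Matrix.of fun p r => φ (Matrix.of fun a c => M (a, p.2) (c, r.2)) p.1 r.1

/-- Complete positivity of a linear map `φ : ℝ^{q×q} → ℝ^{q×q}`. -/
def IsCompletelyPositive {q : ℕ}
    (φ : Matrix (Fin q) (Fin q) ℝ →ₗ[ℝ] Matrix (Fin q) (Fin q) ℝ) : Prop :=
  ∀ (n : ℕ), 0 < n → ∀ M : Matrix (Fin q × Fin n) (Fin q × Fin n) ℝ,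
    M.PosSemidef → (kronExt φ n M).PosSemidef

open scoped MatrixOrder in
lemma psd_exists_sq {n : Type*} [Fintype n] [DecidableEq n] {M : Matrix n n ℝ}
    (h : M.PosSemidef) : ∃ B : Matrix n n ℝ, M = Bᴴ * B := by
  refine ⟨CFC.sqrt M, ?_⟩
  rw [(CFC.sqrt_nonneg M).posSemidef.1.eq, CFC.sqrt_mul_sqrt_self M h.nonneg]

lemma psd_diag_zero {n : Type*} [Fintype n] [DecidableEq n] {M : Matrix n n ℝ}
    (h : M.PosSemidef) (hd : ∀ i, M i i = 0) : M = 0 := by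
  obtain ⟨B, rfl⟩ := psd_exists_sq h
  have hcol : ∀ i k, B k i = 0 := by
    intro i k
    have h0 : ∑ k, B k i * B k i = 0 := by
      simpa [Matrix.mul_apply, Matrix.conjTranspose_apply] using hd i
    have := (Finset.sum_eq_zero_iff_of_nonneg (fun k _ => mul_self_nonneg (B k i))).mp h0 k
      (Finset.mem_univ k)
    nlinarith [this]
  ext i j
  simp [Matrix.mul_apply, Matrix.conjTranspose_apply, hcol]

lemma psd_neg_eq_zero {n : Type*} [Fintype n] [DecidableEq n] {M : Matrix n n ℝ}
    (h : M.PosSemidef) (h2 : (-M).PosSemidef) : M = 0 := by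
  refine psd_diag_zero h fun i => le_antisymm ?_ ?_
  · have := h2.dotProduct_mulVec_nonneg (Pi.single i 1)
    simpa [Matrix.mulVec_single, dotProduct, Pi.single_apply] using this
  · have := h.dotProduct_mulVec_nonneg (Pi.single i 1)
    simpa [Matrix.mulVec_single, dotProduct, Pi.single_apply] using this


lemma vecMulVec_psd {n : Type*} [Fintype n] (x : n → ℝ) : (Matrix.vecMulVec x x).PosSemidef := by
  refine Matrix.PosSemidef.of_dotProduct_mulVec_nonneg ?_ ?_
  · ext i j
    simp [Matrix.vecMulVec_apply, Matrix.conjTranspose_apply, mul_comm]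
  · intro y
    have h1 : (Matrix.vecMulVec x x) *ᵥ y = fun i => x i * (x ⬝ᵥ y) := by
      ext i
      simp [Matrix.mulVec, Matrix.vecMulVec_apply, dotProduct, Finset.mul_sum, mul_assoc]
    rw [h1]
    have h2 : dotProduct (star y) (fun i => x i * (x ⬝ᵥ y)) = (x ⬝ᵥ y) * (x ⬝ᵥ y) := by
      simp only [star_trivial, dotProduct, dotProduct]
      rw [Finset.sum_mul]
      exact Finset.sum_congr rfl fun i _ => by ring
    rw [h2]
    exact mul_self_nonneg _

lemma dotProduct_mulVec_symm {n : Type*} [Fintype n] {G : Matrix n n ℝ}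
    (hsymm : ∀ i j, G j i = G i j) (u v : n → ℝ) : u ⬝ᵥ (G *ᵥ v) = v ⬝ᵥ (G *ᵥ u) := by
  simp only [dotProduct, Matrix.mulVec, Finset.mul_sum]
  rw [Finset.sum_comm]
  refine Finset.sum_congr rfl fun i _ => Finset.sum_congr rfl fun j _ => ?_
  rw [hsymm j i]; ring

lemma rank_one_dominated {n : Type*} [Fintype n] [DecidableEq n] {G : Matrix n n ℝ}
    (hG : G.PosDef) (x : n → ℝ) : ∃ t : ℝ, (t • G - vecMulVec x x).PosSemidef := by
  classical
  have hsymm : ∀ i j, G j i = G i j := fun i j => by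
    have := congrFun (congrFun hG.1.eq i) j
    simpa [Matrix.conjTranspose_apply] using this
  set z := G⁻¹ *ᵥ x with hz
  have hGz : G *ᵥ z = x := by
    rw [hz, Matrix.mulVec_mulVec, Matrix.mul_nonsing_inv _ hG.det_pos.ne'.isUnit,
      Matrix.one_mulVec]
  refine ⟨z ⬝ᵥ (G *ᵥ z), Matrix.PosSemidef.of_dotProduct_mulVec_nonneg ?_ ?_⟩
  · ext i j
    simp only [Matrix.conjTranspose_apply, Matrix.sub_apply, Matrix.smul_apply,
      Matrix.vecMulVec_apply, star_trivial, smul_eq_mul]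
    rw [hsymm i j]; ring
  · intro y
    have key : ∀ s : ℝ, 0 ≤ (y ⬝ᵥ (G *ᵥ y)) * (s * s) + (2 * (z ⬝ᵥ (G *ᵥ y))) * s
        + z ⬝ᵥ (G *ᵥ z) := by
      intro s
      have h0 := hG.posSemidef.dotProduct_mulVec_nonneg (s • y + z)
      simp only [star_trivial] at h0
      calc (0:ℝ) ≤ (s • y + z) ⬝ᵥ (G *ᵥ (s • y + z)) := h0
        _ = (y ⬝ᵥ (G *ᵥ y)) * (s * s) + (2 * (z ⬝ᵥ (G *ᵥ y))) * s + z ⬝ᵥ (G *ᵥ z) := by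
          simp only [Matrix.mulVec_add, Matrix.mulVec_smul, dotProduct_add,
            add_dotProduct, smul_dotProduct, dotProduct_smul,
            smul_eq_mul]
          rw [dotProduct_mulVec_symm hsymm y z]
          ring
    have hdisc : discrim (y ⬝ᵥ (G *ᵥ y)) (2 * (z ⬝ᵥ (G *ᵥ y))) (z ⬝ᵥ (G *ᵥ z)) ≤ 0 :=
      discrim_le_zero key
    have hxy : x ⬝ᵥ y = z ⬝ᵥ (G *ᵥ y) := by
      rw [← hGz, dotProduct_comm, dotProduct_mulVec_symm hsymm y z]
    have hform : (star y) ⬝ᵥ ((z ⬝ᵥ (G *ᵥ z)) • G - vecMulVec x x) *ᵥ y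
        = (z ⬝ᵥ (G *ᵥ z)) * (y ⬝ᵥ (G *ᵥ y)) - (x ⬝ᵥ y) ^ 2 := by
      simp only [star_trivial, Matrix.sub_mulVec, dotProduct_sub]
      congr 1
      · rw [Matrix.smul_mulVec, dotProduct_smul, smul_eq_mul]
      · have : (vecMulVec x x) *ᵥ y = fun i => x i * (x ⬝ᵥ y) := by
          ext i
          simp [Matrix.mulVec, Matrix.vecMulVec_apply, dotProduct, Finset.mul_sum,
            mul_assoc]
        rw [this]
        simp only [dotProduct, Finset.sum_mul]
        rw [sq]
        simp only [Finset.sum_mul]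
        refine Finset.sum_congr rfl fun i _ => by ring
    rw [hform, hxy]
    unfold discrim at hdisc
    nlinarith [hdisc]

/-- The CP map with Choi matrix `C`. -/
def phiC {q : ℕ} (C : Matrix (Fin q × Fin q) (Fin q × Fin q) ℝ) :
    Matrix (Fin q) (Fin q) ℝ →ₗ[ℝ] Matrix (Fin q) (Fin q) ℝ where
  toFun S := Matrix.of fun k l => ∑ a, ∑ b, S a b * C (a, k) (b, l)
  map_add' S T := by
    ext k l
    simp [Finset.sum_add_distrib, add_mul]
  map_smul' t S := by
    ext k l
    simp [Finset.mul_sum, mul_assoc]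

lemma phiC_apply {q : ℕ} (C : Matrix (Fin q × Fin q) (Fin q × Fin q) ℝ)
    (S : Matrix (Fin q) (Fin q) ℝ) (k l : Fin q) :
    phiC C S k l = ∑ a, ∑ b, S a b * C (a, k) (b, l) := rfl

lemma posSemidef_sum {n ι : Type*} [Fintype n] (s : Finset ι) (f : ι → Matrix n n ℝ)
    (h : ∀ i ∈ s, (f i).PosSemidef) : (∑ i ∈ s, f i).PosSemidef := by
  classical
  induction s using Finset.induction with
  | empty => simpa using Matrix.PosSemidef.zero
  | insert _ _ hx ih =>
    rw [Finset.sum_insert hx]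
    exact ((h _ (Finset.mem_insert_self _ _)).add
      (ih fun i hi => h i (Finset.mem_insert_of_mem hi)))

lemma sum_swap4 {ι κ : Type*} [Fintype ι] [Fintype κ] (f : ι → ι → κ → κ → ℝ) :
    ∑ a, ∑ b, ∑ c, ∑ d, f a b c d = ∑ c, ∑ d, ∑ a, ∑ b, f a b c d := by
  calc ∑ a, ∑ b, ∑ c, ∑ d, f a b c d
      = ∑ a, ∑ c, ∑ b, ∑ d, f a b c d := Finset.sum_congr rfl fun a _ => Finset.sum_comm
    _ = ∑ c, ∑ a, ∑ b, ∑ d, f a b c d := Finset.sum_comm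
    _ = ∑ c, ∑ a, ∑ d, ∑ b, f a b c d :=
          Finset.sum_congr rfl fun c _ => Finset.sum_congr rfl fun a _ => Finset.sum_comm
    _ = ∑ c, ∑ d, ∑ a, ∑ b, f a b c d := Finset.sum_congr rfl fun c _ => Finset.sum_comm

lemma kronExt_phiC_eq {q n : ℕ} (N : Matrix (Fin q × Fin q) (Fin q × Fin q) ℝ)
    (M : Matrix (Fin q × Fin n) (Fin q × Fin n) ℝ) :
    kronExt (phiC (Nᴴ * N)) n M
      = ∑ t : Fin q × Fin q,
          (Matrix.of fun (p : Fin q × Fin n) (r : Fin q × Fin n) =>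
            if p.2 = r.2 then N t (p.1, r.1) else 0)ᴴ * M *
          (Matrix.of fun (p : Fin q × Fin n) (r : Fin q × Fin n) =>
            if p.2 = r.2 then N t (p.1, r.1) else 0) := by
  ext ⟨k, u⟩ ⟨l, v⟩
  rw [Matrix.sum_apply]
  simp only [kronExt, phiC_apply, Matrix.of_apply, Matrix.mul_apply, Matrix.conjTranspose_apply,
    star_trivial, Fintype.sum_prod_type, mul_ite, ite_mul, zero_mul, mul_zero,
    Finset.sum_ite_eq, Finset.sum_ite_eq', Finset.mem_univ, if_true,
    Finset.sum_ite_irrel, Finset.sum_const_zero, Finset.mul_sum, Finset.sum_mul]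
  rw [sum_swap4]
  refine Finset.sum_congr rfl fun t1 _ => Finset.sum_congr rfl fun t2 _ => ?_
  rw [Finset.sum_comm]
  exact Finset.sum_congr rfl fun a _ => Finset.sum_congr rfl fun b _ => by ring

lemma phiC_cp {q : ℕ} {C : Matrix (Fin q × Fin q) (Fin q × Fin q) ℝ} (hC : C.PosSemidef) :
    IsCompletelyPositive (phiC C) := by
  obtain ⟨N, rfl⟩ := psd_exists_sq hC
  intro n hn M hM
  rw [kronExt_phiC_eq]
  exact posSemidef_sum _ _ fun t _ => hM.conjTranspose_mul_mul_same _

lemma kronExt_add {q n : ℕ} (φ : Matrix (Fin q) (Fin q) ℝ →ₗ[ℝ] Matrix (Fin q) (Fin q) ℝ)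
    (M N : Matrix (Fin q × Fin n) (Fin q × Fin n) ℝ) :
    kronExt φ n (M + N) = kronExt φ n M + kronExt φ n N := by
  ext ⟨k, u⟩ ⟨l, v⟩
  show φ _ k l = φ _ k l + φ _ k l
  rw [show (Matrix.of fun a c => (M + N) (a, u) (c, v))
      = (Matrix.of fun a c => M (a, u) (c, v)) + (Matrix.of fun a c => N (a, u) (c, v)) from rfl,
    map_add]
  rfl

lemma kronExt_smul {q n : ℕ} (φ : Matrix (Fin q) (Fin q) ℝ →ₗ[ℝ] Matrix (Fin q) (Fin q) ℝ)
    (t : ℝ) (M : Matrix (Fin q × Fin n) (Fin q × Fin n) ℝ) :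
    kronExt φ n (t • M) = t • kronExt φ n M := by
  ext ⟨k, u⟩ ⟨l, v⟩
  show φ _ k l = (t • φ _) k l
  rw [show (Matrix.of fun a c => (t • M) (a, u) (c, v))
      = t • (Matrix.of fun a c => M (a, u) (c, v)) from rfl, LinearMap.map_smul]

lemma sum_swap3 {ι κ : Type*} [Fintype ι] [Fintype κ] (f : ι → ι → κ → ℝ) :
    ∑ a, ∑ b, ∑ c, f a b c = ∑ c, ∑ a, ∑ b, f a b c :=
  (Finset.sum_congr rfl fun a _ => Finset.sum_comm).trans Finset.sum_comm

lemma sum_kron_eq_conj {m q n : ℕ} (D : Matrix (Fin m × Fin q) (Fin m × Fin q) ℝ)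
    (X : Fin m → Matrix (Fin n) (Fin n) ℝ) (hX : ∀ i, (X i).IsSymm) :
    ∑ i, ∑ j, (Matrix.of fun a c => D (i, a) (j, c)) ⊗ₖ (X i * X j)
      = ∑ t : Fin n,
          (Matrix.of fun (p : Fin m × Fin q) (r : Fin q × Fin n) =>
            if p.2 = r.1 then X p.1 t r.2 else 0)ᴴ * D *
          (Matrix.of fun (p : Fin m × Fin q) (r : Fin q × Fin n) =>
            if p.2 = r.1 then X p.1 t r.2 else 0) := by
  have hXe : ∀ i u t, X i u t = X i t u := by
    intro i u t
    have := congrFun (congrFun (hX i) u) t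
    simpa [Matrix.transpose_apply] using this.symm
  ext ⟨a, u⟩ ⟨c, w⟩
  rw [Matrix.sum_apply, Matrix.sum_apply]
  simp only [Finset.sum_apply, Matrix.sum_apply, Matrix.kroneckerMap_apply, Matrix.of_apply,
    Matrix.mul_apply, Matrix.conjTranspose_apply, star_trivial, Fintype.sum_prod_type,
    mul_ite, ite_mul, zero_mul, mul_zero, Finset.sum_ite_eq, Finset.sum_ite_eq',
    Finset.mem_univ, if_true, Finset.sum_const_zero, Finset.mul_sum, Finset.sum_mul]
  rw [sum_swap3]
  refine Finset.sum_congr rfl fun t _ => ?_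
  rw [Finset.sum_comm]
  refine Finset.sum_congr rfl fun i _ => Finset.sum_congr rfl fun j _ => ?_
  rw [hXe j u t]
  ring

lemma kronExt_sum_kron {q n m' : ℕ} (φ : Matrix (Fin q) (Fin q) ℝ →ₗ[ℝ] Matrix (Fin q) (Fin q) ℝ)
    (B : Fin m' → Fin m' → Matrix (Fin q) (Fin q) ℝ)
    (X : Fin m' → Fin m' → Matrix (Fin n) (Fin n) ℝ) :
    kronExt φ n (∑ i, ∑ j, B i j ⊗ₖ X i j) = ∑ i, ∑ j, (φ (B i j)) ⊗ₖ X i j := by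
  ext ⟨k, u⟩ ⟨l, v⟩
  have h1 : (Matrix.of fun a c => (∑ i, ∑ j, B i j ⊗ₖ X i j) (a, u) (c, v))
      = ∑ i, ∑ j, X i j u v • B i j := by
    ext a c
    simp [Matrix.sum_apply, Matrix.smul_apply, Matrix.kroneckerMap_apply, mul_comm]
  show φ _ k l = _
  rw [h1, map_sum]
  simp only [map_sum, LinearMap.map_smul]
  rw [Matrix.sum_apply, Matrix.sum_apply]
  simp [Matrix.sum_apply, Matrix.smul_apply, Matrix.kroneckerMap_apply, mul_comm]

lemma kernel_lemma {m q nh : ℕ} (hnh : 0 < nh)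
    (B : Fin m → Fin m → Matrix (Fin q) (Fin q) ℝ)
    (Xh : Fin m → Matrix (Fin nh) (Fin nh) ℝ) (hXs : ∀ i, (Xh i).IsSymm)
    (hG : (∑ i, ∑ j, B i j ⊗ₖ (Xh i * Xh j)).PosDef)
    (C : Matrix (Fin q × Fin q) (Fin q × Fin q) ℝ)
    (P : Matrix (Fin m × Fin q) (Fin m × Fin q) ℝ)
    (hC : C.PosSemidef) (hP : P.PosSemidef)
    (hzero : ∀ p r : Fin m × Fin q, phiC C (B p.1 r.1) p.2 r.2 + P p r = 0) :
    C = 0 ∧ P = 0 := by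
  classical
  set G := ∑ i, ∑ j, B i j ⊗ₖ (Xh i * Xh j) with hGdef
  set D : Matrix (Fin m × Fin q) (Fin m × Fin q) ℝ :=
    Matrix.of fun p r => phiC C (B p.1 r.1) p.2 r.2 with hDdef
  have hD : D = -P := by
    ext p r
    have := hzero p r
    simp only [hDdef, Matrix.of_apply, Matrix.neg_apply]
    linarith
  set K := kronExt (phiC C) nh G with hKdef
  have hK1 : K.PosSemidef := phiC_cp hC nh hnh G hG.posSemidef
  have hblocks : ∀ i j, phiC C (B i j) = Matrix.of fun a c => D (i, a) (j, c) := by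
    intro i j; ext a c; rfl
  have hK2 : K = ∑ t : Fin nh,
      (Matrix.of fun (p : Fin m × Fin q) (r : Fin q × Fin nh) =>
        if p.2 = r.1 then Xh p.1 t r.2 else 0)ᴴ * D *
      (Matrix.of fun (p : Fin m × Fin q) (r : Fin q × Fin nh) =>
        if p.2 = r.1 then Xh p.1 t r.2 else 0) := by
    rw [hKdef, hGdef, kronExt_sum_kron]
    rw [← sum_kron_eq_conj D Xh hXs]
    exact Finset.sum_congr rfl fun i _ => Finset.sum_congr rfl fun j _ => by rw [hblocks]
  have hKneg : (-K).PosSemidef := by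
    rw [hK2, hD]
    have : ∀ (Y : Matrix (Fin m × Fin q) (Fin q × Fin nh) ℝ),
        Yᴴ * (-P) * Y = -(Yᴴ * P * Y) := fun Y => by
      rw [Matrix.mul_neg, Matrix.neg_mul]
    simp only [this]
    simp only [← Finset.sum_neg_distrib, neg_neg]
    exact posSemidef_sum _ _ fun t _ => hP.conjTranspose_mul_mul_same _
  have hK0 : K = 0 := psd_neg_eq_zero hK1 hKneg
  -- rank ones annihilated
  have hro : ∀ x : Fin q × Fin nh → ℝ, kronExt (phiC C) nh (vecMulVec x x) = 0 := by
    intro x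
    obtain ⟨t, ht⟩ := rank_one_dominated hG x
    have h1 := phiC_cp hC nh hnh _ ht
    have h2 := phiC_cp hC nh hnh _ (vecMulVec_psd x)
    have hsplit : t • G - vecMulVec x x = t • G + (-1 : ℝ) • vecMulVec x x := by
      rw [sub_eq_add_neg, neg_one_smul]
    rw [hsplit, kronExt_add, kronExt_smul, kronExt_smul, ← hKdef, hK0, smul_zero,
      zero_add, neg_one_smul] at h1
    exact psd_neg_eq_zero h2 h1
  -- diagonal of C is zero
  have hdiag : ∀ a : Fin q, ∀ k : Fin q, C ((a, k)) ((a, k)) = 0 := by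
    intro a k
    have hnhlt : (⟨0, hnh⟩ : Fin nh) = ⟨0, hnh⟩ := rfl
    set u0 : Fin nh := ⟨0, hnh⟩
    set y : Fin q → ℝ := Pi.single a 1 with hy
    set x : Fin q × Fin nh → ℝ := fun p => if p.2 = u0 then y p.1 else 0 with hx
    have hxx : (Matrix.of fun b c => (vecMulVec x x) (b, u0) (c, u0)) = vecMulVec y y := by
      ext b c
      simp [hx, Matrix.vecMulVec_apply]
    have h0 := congrFun (congrFun (hro x) (k, u0)) (k, u0)
    have : phiC C (vecMulVec y y) k k = 0 := by
      rw [← hxx]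
      exact h0
    rw [phiC_apply] at this
    simpa [hy, Matrix.vecMulVec_apply, Pi.single_apply, Finset.sum_ite_eq, mul_ite, ite_mul,
      zero_mul, mul_zero] using this
  have hC0 : C = 0 := psd_diag_zero hC fun p => hdiag p.1 p.2
  refine ⟨hC0, ?_⟩
  ext p r
  have := hzero p r
  rw [hC0] at this
  simp only [phiC_apply] at this
  simpa using this
lemma sum6_reorder {α β γ : Type*} [Fintype α] [Fintype β] [Fintype γ]
    (f : α → β → α → β → γ → γ → ℝ) :
    ∑ a, ∑ k, ∑ b, ∑ l, ∑ i, ∑ j, f a k b l i j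
      = ∑ i, ∑ k, ∑ j, ∑ l, ∑ a, ∑ b, f a k b l i j := by
  conv_lhs => enter [2, a, 2, k, 2, b]; rw [Finset.sum_comm]
  conv_lhs => enter [2, a, 2, k]; rw [Finset.sum_comm]
  conv_lhs => enter [2, a]; rw [Finset.sum_comm]
  conv_lhs => rw [Finset.sum_comm]
  conv_lhs => enter [2, i]; rw [Finset.sum_comm]
  conv_lhs => enter [2, i, 2, k, 2, a, 2, b]; rw [Finset.sum_comm]
  conv_lhs => enter [2, i, 2, k, 2, a]; rw [Finset.sum_comm]
  conv_lhs => enter [2, i, 2, k]; rw [Finset.sum_comm]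
  conv_lhs => enter [2, i, 2, k, 2, j, 2, a]; rw [Finset.sum_comm]
  conv_lhs => enter [2, i, 2, k, 2, j]; rw [Finset.sum_comm]

lemma image_cone_isClosed {D E : Type*} [NormedAddCommGroup D] [NormedSpace ℝ D]
    [FiniteDimensional ℝ D] [NormedAddCommGroup E] [NormedSpace ℝ E]
    (f : D →ₗ[ℝ] E) (S : Set D) (hS : IsClosed S)
    (hsmul : ∀ (c : ℝ), 0 ≤ c → ∀ x ∈ S, c • x ∈ S)
    (hker : ∀ x ∈ S, f x = 0 → x = 0) : IsClosed (f '' S) := by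
  classical
  have hfc : Continuous f := f.continuous_of_finiteDimensional
  by_cases hS0 : S ⊆ {0}
  · have hsub : f '' S ⊆ {0} := by
      rintro _ ⟨x, hx, rfl⟩
      have : x = 0 := hS0 hx
      simp [this]
    rcases Set.subset_singleton_iff_eq.mp hsub with h | h
    · rw [h]; exact isClosed_empty
    · rw [h]; exact isClosed_singleton
  obtain ⟨x₁, hx₁S, hx₁⟩ : ∃ x ∈ S, x ≠ 0 := by
    rcases Set.not_subset.mp hS0 with ⟨x, hxS, hx⟩
    exact ⟨x, hxS, by simpa using hx⟩
  have hmemsp : ∀ x ∈ S, x ≠ 0 → (‖x‖⁻¹ • x) ∈ S ∩ Metric.sphere 0 1 := by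
    intro x hx hx0
    refine ⟨hsmul _ (by positivity) x hx, ?_⟩
    simp [norm_smul, norm_ne_zero_iff.mpr hx0, abs_of_nonneg, inv_mul_cancel₀,
      norm_ne_zero_iff.mpr hx0]
  have hT : IsCompact (S ∩ Metric.sphere (0 : D) 1) :=
    (isCompact_sphere 0 1).inter_left hS
  have hTne : (S ∩ Metric.sphere (0 : D) 1).Nonempty := ⟨_, hmemsp x₁ hx₁S hx₁⟩
  obtain ⟨x₀, hx₀, hmin'⟩ := hT.exists_isMinOn hTne (hfc.norm.continuousOn)
  have hmin : ∀ z ∈ S ∩ Metric.sphere (0 : D) 1, ‖f x₀‖ ≤ ‖f z‖ := fun z hz => hmin' hz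
  set c := ‖f x₀‖ with hc
  have hcpos : 0 < c := by
    rw [hc, norm_pos_iff]
    intro h0
    have h1 : x₀ = 0 := hker _ hx₀.1 h0
    have h2 := hx₀.2
    rw [h1] at h2
    simp [Metric.mem_sphere] at h2
  have hbound : ∀ x ∈ S, c * ‖x‖ ≤ ‖f x‖ := by
    intro x hx
    rcases eq_or_ne x 0 with rfl | hx0
    · simp
    · have h1 := hmin _ (hmemsp x hx hx0)
      rw [_root_.map_smul, norm_smul] at h1
      have hnx : 0 < ‖x‖ := norm_pos_iff.mpr hx0
      have : c ≤ ‖x‖⁻¹ * ‖f x‖ := by simpa [abs_of_nonneg, hnx.le] using h1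
      calc c * ‖x‖ ≤ (‖x‖⁻¹ * ‖f x‖) * ‖x‖ := by nlinarith
        _ = ‖f x‖ := by field_simp
  refine IsSeqClosed.isClosed ?_
  intro u y hu huy
  choose x hxS hfx using hu
  obtain ⟨R, hR0, hRb⟩ := cauchySeq_bdd huy.cauchySeq
  have hub : ∀ n, ‖u n‖ ≤ ‖u 0‖ + R := by
    intro n
    have := hRb n 0
    have h2 : ‖u n - u 0‖ < R := by rwa [dist_eq_norm] at this
    calc ‖u n‖ = ‖u n - u 0 + u 0‖ := by rw [sub_add_cancel]
      _ ≤ ‖u n - u 0‖ + ‖u 0‖ := norm_add_le _ _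
      _ ≤ ‖u 0‖ + R := by linarith
  set R' := (‖u 0‖ + R) / c with hR'
  have hxK : ∀ n, x n ∈ Metric.closedBall (0 : D) R' ∩ S := by
    intro n
    refine ⟨?_, hxS n⟩
    rw [Metric.mem_closedBall, dist_zero_right]
    have h1 := hbound _ (hxS n)
    rw [hfx n] at h1
    have h2 := hub n
    rw [hR', le_div_iff₀ hcpos]
    nlinarith
  have hcomp : IsCompact (Metric.closedBall (0 : D) R' ∩ S) :=
    (isCompact_closedBall (0 : D) R').inter_right hS
  obtain ⟨a, ha, ψ, hψmono, hconv⟩ := hcomp.tendsto_subseq hxK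
  refine ⟨a, ha.2, ?_⟩
  have h1 : Filter.Tendsto (fun k => f (x (ψ k))) Filter.atTop (nhds (f a)) :=
    (hfc.tendsto a).comp hconv
  have h2 : Filter.Tendsto (fun k => u (ψ k)) Filter.atTop (nhds y) :=
    huy.comp hψmono.tendsto_atTop
  simp only [hfx] at h1
  exact tendsto_nhds_unique h1 h2

lemma psd_smul {n : Type*} [Fintype n] {M : Matrix n n ℝ} (h : M.PosSemidef) {c : ℝ}
    (hc : 0 ≤ c) : (c • M).PosSemidef := by
  refine Matrix.PosSemidef.of_dotProduct_mulVec_nonneg ?_ ?_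
  · have h1 := h.1
    unfold Matrix.IsHermitian at *
    rw [Matrix.conjTranspose_smul, h1]
    simp
  · intro x
    rw [Matrix.smul_mulVec, dotProduct_smul, smul_eq_mul]
    exact mul_nonneg hc (h.dotProduct_mulVec_nonneg x)

lemma isClosed_psd (α : Type*) [Fintype α] [DecidableEq α] :
    IsClosed {x : EuclideanSpace ℝ (α × α) | (Matrix.of fun a b => x (a, b)).PosSemidef} := by
  have hset : {x : EuclideanSpace ℝ (α × α) | (Matrix.of fun a b => x (a, b)).PosSemidef}
      = (⋂ (p : α × α), {x : EuclideanSpace ℝ (α × α) | x (p.2, p.1) = x (p.1, p.2)})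
        ∩ ⋂ (v : α → ℝ), {x : EuclideanSpace ℝ (α × α) |
            0 ≤ ∑ a, ∑ b, v a * x (a, b) * v b} := by
    ext x
    simp only [Set.mem_inter_iff, Set.mem_iInter, Set.mem_setOf_eq]
    constructor
    · intro h
      constructor
      · intro p
        have := congrFun (congrFun h.1.eq p.1) p.2
        simpa [Matrix.conjTranspose_apply] using this
      · intro v
        have := h.dotProduct_mulVec_nonneg v
        simpa [dotProduct, Matrix.mulVec, Finset.mul_sum, mul_assoc] using this
    · intro ⟨h1, h2⟩
      refine Matrix.PosSemidef.of_dotProduct_mulVec_nonneg ?_ ?_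
      · ext p r
        simpa [Matrix.conjTranspose_apply] using h1 (p, r)
      · intro v
        have := h2 v
        simpa [dotProduct, Matrix.mulVec, Finset.mul_sum, mul_assoc] using this
  rw [hset]
  have hcont : ∀ pr : α × α, Continuous (fun x : EuclideanSpace ℝ (α × α) => x pr) :=
    fun pr => (EuclideanSpace.proj pr).continuous
  refine IsClosed.inter (isClosed_iInter fun p => ?_) (isClosed_iInter fun v => ?_)
  · exact isClosed_eq (hcont _) (hcont _)
  · refine isClosed_le continuous_const ?_
    refine continuous_finset_sum _ fun a _ => continuous_finset_sum _ fun b _ => ?_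
    exact Continuous.mul (Continuous.mul continuous_const (hcont _)) continuous_const

/-- The linear map sending `(C, P)` to the flattened block matrix `(φ_C(B i j)) + P`. -/
def Fmap (m q : ℕ) (B : Fin m → Fin m → Matrix (Fin q) (Fin q) ℝ) :
    (EuclideanSpace ℝ ((Fin q × Fin q) × (Fin q × Fin q))
      × EuclideanSpace ℝ ((Fin m × Fin q) × (Fin m × Fin q)))
    →ₗ[ℝ] EuclideanSpace ℝ ((Fin m × Fin q) × (Fin m × Fin q)) where
  toFun x := WithLp.toLp 2 fun pr =>
    (∑ a, ∑ b, B pr.1.1 pr.2.1 a b * x.1 ((a, pr.1.2), (b, pr.2.2))) + x.2 pr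
  map_add' x y := by
    ext pr
    simp only [Prod.fst_add, Prod.snd_add, PiLp.add_apply, PiLp.toLp_apply]
    simp only [mul_add, Finset.sum_add_distrib]
    ring
  map_smul' c x := by
    ext pr
    simp only [Prod.smul_fst, Prod.smul_snd, PiLp.smul_apply, PiLp.toLp_apply, RingHom.id_apply, smul_eq_mul]
    have h : ∀ a b : Fin q, B pr.1.1 pr.2.1 a b * (c * x.1 ((a, pr.1.2), (b, pr.2.2)))
        = c * (B pr.1.1 pr.2.1 a b * x.1 ((a, pr.1.2), (b, pr.2.2))) := fun a b => by ring
    simp only [h, ← Finset.mul_sum]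
    ring

lemma Fmap_apply (m q : ℕ) (B : Fin m → Fin m → Matrix (Fin q) (Fin q) ℝ)
    (x : EuclideanSpace ℝ ((Fin q × Fin q) × (Fin q × Fin q))
      × EuclideanSpace ℝ ((Fin m × Fin q) × (Fin m × Fin q)))
    (pr : (Fin m × Fin q) × (Fin m × Fin q)) :
    Fmap m q B x pr
      = (∑ a, ∑ b, B pr.1.1 pr.2.1 a b * x.1 ((a, pr.1.2), (b, pr.2.2))) + x.2 pr := rfl

lemma sum_pair_expand {α β : Type*} [Fintype α] [Fintype β] (f : (α × β) × (α × β) → ℝ) :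
    ∑ pr : (α × β) × (α × β), f pr = ∑ i, ∑ k, ∑ j, ∑ l, f ((i, k), (j, l)) :=
  calc ∑ pr : (α × β) × (α × β), f pr
      = ∑ p : α × β, ∑ r : α × β, f (p, r) := Fintype.sum_prod_type _
    _ = ∑ p : α × β, ∑ j, ∑ l, f (p, (j, l)) :=
        Finset.sum_congr rfl fun p _ => Fintype.sum_prod_type _
    _ = ∑ i, ∑ k, ∑ j, ∑ l, f ((i, k), (j, l)) := Fintype.sum_prod_type _


/-- **Separation step in the proof of Theorem 1.1.** If `∑ Bᵢⱼ ⊗ X̂ᵢ X̂ⱼ ≻ 0` for some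
symmetric tuple `X̂`, and for no completely positive `φ` the block matrix
`(Aᵢⱼ - φ(Bᵢⱼ))ᵢⱼ` is positive semidefinite, then there is a positive semidefinite
`M ∈ ℝ^{(mq)×(mq)}`, with blocks `Mᵢⱼ`, such that `∑ ⟨Aᵢⱼ, Mᵢⱼ⟩ < 0` and
`∑ Bᵢⱼ ⊗ Mᵢⱼ ⪰ 0`. -/
theorem stmt_8 (m q : ℕ) (hm : 0 < m) (hq : 0 < q)
    (A B : Fin m → Fin m → Matrix (Fin q) (Fin q) ℝ)
    (hA : ∀ i j, A i j = (A j i)ᵀ) (hB : ∀ i j, B i j = (B j i)ᵀ)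
    (hgpos : ∃ (nh : ℕ) (_ : 0 < nh) (Xh : Fin m → Matrix (Fin nh) (Fin nh) ℝ),
      (∀ i, (Xh i).IsSymm) ∧ (∑ i, ∑ j, B i j ⊗ₖ (Xh i * Xh j)).PosDef)
    (hsep : ∀ φ : Matrix (Fin q) (Fin q) ℝ →ₗ[ℝ] Matrix (Fin q) (Fin q) ℝ,
      IsCompletelyPositive φ →
      ¬ (Matrix.of fun p r : Fin m × Fin q =>
          (A p.1 r.1 - φ (B p.1 r.1)) p.2 r.2).PosSemidef) :
    ∃ M : Matrix (Fin m × Fin q) (Fin m × Fin q) ℝ, M.PosSemidef ∧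
      (∑ i, ∑ j, ∑ k, ∑ l, A i j k l * M (i, k) (j, l)) < 0 ∧
      (∑ i, ∑ j, B i j ⊗ₖ (Matrix.of fun k l => M (i, k) (j, l))).PosSemidef := by
  classical
  obtain ⟨nh, hnh, Xh, hXs, hG⟩ := hgpos
  set Sset : Set (EuclideanSpace ℝ ((Fin q × Fin q) × (Fin q × Fin q))
      × EuclideanSpace ℝ ((Fin m × Fin q) × (Fin m × Fin q))) :=
    {x | (Matrix.of fun a b => x.1 (a, b)).PosSemidef
      ∧ (Matrix.of fun p r => x.2 (p, r)).PosSemidef} with hSdef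
  have hSclosed : IsClosed Sset :=
    IsClosed.inter ((isClosed_psd (Fin q × Fin q)).preimage continuous_fst)
      ((isClosed_psd (Fin m × Fin q)).preimage continuous_snd)
  have hsmulS : ∀ (c : ℝ), 0 ≤ c → ∀ x ∈ Sset, c • x ∈ Sset := by
    intro c hc x hx
    constructor
    · have h1 : (Matrix.of fun a b => (c • x).1 (a, b))
          = c • (Matrix.of fun a b => x.1 (a, b)) := by ext a b; rfl
      rw [h1]; exact psd_smul hx.1 hc
    · have h1 : (Matrix.of fun p r => (c • x).2 (p, r))
          = c • (Matrix.of fun p r => x.2 (p, r)) := by ext p r; rfl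
      rw [h1]; exact psd_smul hx.2 hc
  have haddS : ∀ x ∈ Sset, ∀ z ∈ Sset, x + z ∈ Sset := by
    intro x hx z hz
    constructor
    · have h1 : (Matrix.of fun a b => (x + z).1 (a, b))
          = (Matrix.of fun a b => x.1 (a, b)) + (Matrix.of fun a b => z.1 (a, b)) := by
        ext a b; rfl
      rw [h1]; exact hx.1.add hz.1
    · have h1 : (Matrix.of fun p r => (x + z).2 (p, r))
          = (Matrix.of fun p r => x.2 (p, r)) + (Matrix.of fun p r => z.2 (p, r)) := by
        ext p r; rfl
      rw [h1]; exact hx.2.add hz.2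
  have hkerF : ∀ x ∈ Sset, Fmap m q B x = 0 → x = 0 := by
    intro x hx h0
    have hz : ∀ p r : Fin m × Fin q,
        phiC (Matrix.of fun a b => x.1 (a, b)) (B p.1 r.1) p.2 r.2
          + (Matrix.of fun p r => x.2 (p, r)) p r = 0 := by
      intro p r
      have h1 : Fmap m q B x (p, r) = (0 : EuclideanSpace ℝ ((Fin m × Fin q) × (Fin m × Fin q))) (p, r) := by rw [h0]
      rw [Fmap_apply] at h1
      simpa [phiC_apply] using h1
    obtain ⟨hC0, hP0⟩ := kernel_lemma hnh B Xh hXs hG _ _ hx.1 hx.2 hz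
    have hx1 : x.1 = 0 := by
      ext pq
      have := congrFun (congrFun hC0 (pq.1)) (pq.2)
      simpa using this
    have hx2 : x.2 = 0 := by
      ext pq
      have := congrFun (congrFun hP0 (pq.1)) (pq.2)
      simpa using this
    exact Prod.ext hx1 hx2
  set K : ConvexCone ℝ (EuclideanSpace ℝ ((Fin m × Fin q) × (Fin m × Fin q))) :=
    { carrier := Fmap m q B '' Sset
      smul_mem' := by
        rintro c hc _ ⟨x, hx, rfl⟩
        exact ⟨c • x, hsmulS c hc.le x hx, (Fmap m q B).map_smul c x⟩
      add_mem' := by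
        rintro _ ⟨x, hx, rfl⟩ _ ⟨z, hz, rfl⟩
        exact ⟨x + z, haddS x hx z hz, ((Fmap m q B).map_add x z)⟩ } with hKdef
  have hKne : (K : Set (EuclideanSpace ℝ ((Fin m × Fin q) × (Fin m × Fin q)))).Nonempty :=
    ⟨0, ⟨0, ⟨by convert (Matrix.PosSemidef.zero : (0 : Matrix _ _ ℝ).PosSemidef) using 1; ext; simp, by convert (Matrix.PosSemidef.zero : (0 : Matrix _ _ ℝ).PosSemidef) using 1; ext; simp⟩,
      (Fmap m q B).map_zero⟩⟩
  have hKclosed : IsClosed (K : Set (EuclideanSpace ℝ ((Fin m × Fin q) × (Fin m × Fin q)))) :=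
    image_cone_isClosed (Fmap m q B) Sset hSclosed hsmulS hkerF
  set bigA : EuclideanSpace ℝ ((Fin m × Fin q) × (Fin m × Fin q)) :=
    WithLp.toLp 2 (fun pr : (Fin m × Fin q) × (Fin m × Fin q) => A pr.1.1 pr.2.1 pr.1.2 pr.2.2) with hbigA
  have hAnotin : bigA ∉ K := by
    rintro ⟨x, hx, hFx⟩
    refine hsep (phiC (Matrix.of fun a b => x.1 (a, b))) (phiC_cp hx.1) ?_
    have heq : (Matrix.of fun p r : Fin m × Fin q =>
        (A p.1 r.1 - phiC (Matrix.of fun a b => x.1 (a, b)) (B p.1 r.1)) p.2 r.2)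
        = Matrix.of fun p r => x.2 (p, r) := by
      ext p r
      have h1 := congrFun (congrArg WithLp.ofLp hFx) (p, r)
      rw [Fmap_apply] at h1
      simp only [Matrix.of_apply, Matrix.sub_apply, phiC_apply, hbigA, PiLp.toLp_apply] at *
      linarith [h1]
    rw [heq]
    exact hx.2
  let KP : ProperCone ℝ (EuclideanSpace ℝ ((Fin m × Fin q) × (Fin m × Fin q))) := {
      carrier := (K : Set _)
      add_mem' := fun ha hb => K.add_mem ha hb
      zero_mem' := show (0 : EuclideanSpace ℝ ((Fin m × Fin q) × (Fin m × Fin q))) ∈ (K : Set _) from ⟨0, ⟨by convert (Matrix.PosSemidef.zero : (0 : Matrix _ _ ℝ).PosSemidef) using 1; ext; simp,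
        by convert (Matrix.PosSemidef.zero : (0 : Matrix _ _ ℝ).PosSemidef) using 1; ext; simp⟩,
        (Fmap m q B).map_zero⟩
      smul_mem' := fun c w hw => by
        rcases hw with ⟨w, hw, rfl⟩
        exact ⟨(c : ℝ) • w, hsmulS c c.2 w hw, by rw [LinearMap.map_smul]; rfl⟩
      isClosed' := hKclosed }
  obtain ⟨y, hy1, hy2⟩ :=
    KP.hyperplane_separation' (x₀ := bigA) hAnotin
  have hpos : ∀ x ∈ Sset, 0 ≤ ∑ pr : (Fin m × Fin q) × (Fin m × Fin q),
      Fmap m q B x pr * y pr := by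
    intro x hx
    have h1 := hy1 _ ⟨x, hx, rfl⟩
    simpa only [PiLp.inner_apply, Real.inner_apply] using h1
  have hIA : ∑ pr : (Fin m × Fin q) × (Fin m × Fin q), y pr * bigA pr < 0 := by
    simpa only [PiLp.inner_apply, RCLike.inner_apply, conj_trivial] using hy2
  set M : Matrix (Fin m × Fin q) (Fin m × Fin q) ℝ :=
    Matrix.of fun p r => (y (p, r) + y (r, p)) / 2 with hM
  have hMsymm : ∀ p r, M r p = M p r := by
    intro p r
    simp only [hM, Matrix.of_apply]
    ring
  refine ⟨M, ?_, ?_, ?_⟩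
  · -- M is PSD
    refine Matrix.PosSemidef.of_dotProduct_mulVec_nonneg ?_ ?_
    · ext p r
      simp only [Matrix.conjTranspose_apply, star_trivial, hM, Matrix.of_apply]
      ring
    · intro v
      have e1 : star v ⬝ᵥ (M *ᵥ v)
          = ∑ p, ∑ r, (v p * y (p, r) * v r + v p * y (r, p) * v r) / 2 := by
        simp only [star_trivial, dotProduct, Matrix.mulVec, Finset.mul_sum, hM,
          Matrix.of_apply]
        exact Finset.sum_congr rfl fun p _ => Finset.sum_congr rfl fun r _ => by ring
      have e2' : ∑ p, ∑ r, v p * y (r, p) * v r = ∑ p, ∑ r, v p * y (p, r) * v r := by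
        rw [Finset.sum_comm]
        exact Finset.sum_congr rfl fun p _ => Finset.sum_congr rfl fun r _ => by ring
      have e2 : ∑ p, ∑ r, (v p * y (p, r) * v r + v p * y (r, p) * v r) / 2
          = ∑ p, ∑ r, v p * y (p, r) * v r := by
        simp only [← Finset.sum_div, Finset.sum_add_distrib, e2']
        ring
      rw [e1, e2]
      set vE : EuclideanSpace ℝ ((Fin m × Fin q) × (Fin m × Fin q)) :=
        WithLp.toLp 2 (fun pr : (Fin m × Fin q) × (Fin m × Fin q) => v pr.1 * v pr.2) with hvE
      have hxS : ((0 : EuclideanSpace ℝ ((Fin q × Fin q) × (Fin q × Fin q))), vE) ∈ Sset := by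
        constructor
        · convert (Matrix.PosSemidef.zero : (0 : Matrix _ _ ℝ).PosSemidef) using 1; ext; simp
        · have : (Matrix.of fun p r : Fin m × Fin q => vE (p, r)) = Matrix.vecMulVec v v := by
            ext p r
            simp [hvE, Matrix.vecMulVec_apply]
          rw [this]
          exact vecMulVec_psd v
      have h2 := hpos _ hxS
      have e3 : ∑ pr : (Fin m × Fin q) × (Fin m × Fin q), Fmap m q B (0, vE) pr * y pr
          = ∑ p, ∑ r, v p * y (p, r) * v r := by
        rw [Fintype.sum_prod_type]
        refine Finset.sum_congr rfl fun p _ => Finset.sum_congr rfl fun r _ => ?_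
        rw [Fmap_apply]
        simp only [hvE, PiLp.zero_apply, mul_zero, Finset.sum_const_zero, zero_add]
        ring
      rw [← e3]
      exact h2
  · -- the objective is negative
    have hAe : ∀ i j k l, A j i l k = A i j k l := by
      intro i j k l
      rw [hA i j]
      rfl
    have t1 : ∑ i, ∑ j, ∑ k, ∑ l, A i j k l * M (i, k) (j, l)
        = ∑ i, ∑ j, ∑ k, ∑ l,
            (A i j k l * y ((i, k), (j, l)) + A i j k l * y ((j, l), (i, k))) / 2 := by
      refine Finset.sum_congr rfl fun i _ => Finset.sum_congr rfl fun j _ =>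
        Finset.sum_congr rfl fun k _ => Finset.sum_congr rfl fun l _ => ?_
      simp only [hM, Matrix.of_apply]
      ring
    have t2 : ∑ i, ∑ j, ∑ k, ∑ l, A i j k l * y ((j, l), (i, k))
        = ∑ i, ∑ j, ∑ k, ∑ l, A i j k l * y ((i, k), (j, l)) := by
      rw [Finset.sum_comm]
      conv_lhs => enter [2, i, 2, j]; rw [Finset.sum_comm]
      refine Finset.sum_congr rfl fun i _ => Finset.sum_congr rfl fun j _ =>
        Finset.sum_congr rfl fun k _ => Finset.sum_congr rfl fun l _ => ?_
      rw [hAe i j k l]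
    have t3 : ∑ pr : (Fin m × Fin q) × (Fin m × Fin q), y pr * bigA pr
        = ∑ i, ∑ j, ∑ k, ∑ l, A i j k l * y ((i, k), (j, l)) := by
      rw [sum_pair_expand (fun pr => y pr * bigA pr)]
      conv_lhs => enter [2, i]; rw [Finset.sum_comm]
      refine Finset.sum_congr rfl fun i _ => Finset.sum_congr rfl fun j _ =>
        Finset.sum_congr rfl fun k _ => Finset.sum_congr rfl fun l _ => ?_
      simp only [hbigA]
      ring
    rw [t1]
    simp only [← Finset.sum_div, Finset.sum_add_distrib, t2]
    rw [← t3] at *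
    have : (∑ pr : (Fin m × Fin q) × (Fin m × Fin q), y pr * bigA pr) < 0 := hIA
    linarith
  · -- the Kronecker combination is PSD
    have hBe : ∀ i j a c, B j i c a = B i j a c := by
      intro i j a c
      rw [hB i j]
      rfl
    refine Matrix.PosSemidef.of_dotProduct_mulVec_nonneg ?_ ?_
    · ext ⟨a, k⟩ ⟨c, l⟩
      simp only [Matrix.conjTranspose_apply, star_trivial, Matrix.sum_apply,
        Matrix.kroneckerMap_apply, Matrix.of_apply]
      rw [Finset.sum_comm]
      refine Finset.sum_congr rfl fun i _ => Finset.sum_congr rfl fun j _ => ?_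
      rw [hBe i j a c, hMsymm (i, k) (j, l)]
    · intro v
      have e1 : star v ⬝ᵥ ((∑ i, ∑ j, B i j ⊗ₖ (Matrix.of fun k l => M (i, k) (j, l))) *ᵥ v)
          = ∑ a, ∑ k, ∑ b, ∑ l, ∑ i, ∑ j,
              (v (a, k) * B i j a b * v (b, l)) * M (i, k) (j, l) := by
        simp only [star_trivial, dotProduct, Matrix.mulVec, Matrix.sum_apply,
          Matrix.kroneckerMap_apply, Matrix.of_apply, Finset.mul_sum, Finset.sum_mul,
          Fintype.sum_prod_type]
        refine Finset.sum_congr rfl fun a _ => Finset.sum_congr rfl fun k _ =>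
          Finset.sum_congr rfl fun b _ => Finset.sum_congr rfl fun l _ =>
          Finset.sum_congr rfl fun i _ => Finset.sum_congr rfl fun j _ => by ring
      rw [e1]
      have t1 : ∑ a, ∑ k, ∑ b, ∑ l, ∑ i, ∑ j,
          (v (a, k) * B i j a b * v (b, l)) * M (i, k) (j, l)
          = ∑ a, ∑ k, ∑ b, ∑ l, ∑ i, ∑ j,
              ((v (a, k) * B i j a b * v (b, l)) * y ((i, k), (j, l))
                + (v (a, k) * B i j a b * v (b, l)) * y ((j, l), (i, k))) / 2 := by
        refine Finset.sum_congr rfl fun a _ => Finset.sum_congr rfl fun k _ =>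
          Finset.sum_congr rfl fun b _ => Finset.sum_congr rfl fun l _ =>
          Finset.sum_congr rfl fun i _ => Finset.sum_congr rfl fun j _ => ?_
        simp only [hM, Matrix.of_apply]
        ring
      have t2 : ∑ a, ∑ k, ∑ b, ∑ l, ∑ i, ∑ j,
          (v (a, k) * B i j a b * v (b, l)) * y ((j, l), (i, k))
          = ∑ a, ∑ k, ∑ b, ∑ l, ∑ i, ∑ j,
              (v (a, k) * B i j a b * v (b, l)) * y ((i, k), (j, l)) := by
        rw [sum_swap4]
        conv_lhs => enter [2, b, 2, l, 2, a, 2, k]; rw [Finset.sum_comm]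
        refine Finset.sum_congr rfl fun a _ => Finset.sum_congr rfl fun k _ =>
          Finset.sum_congr rfl fun b _ => Finset.sum_congr rfl fun l _ =>
          Finset.sum_congr rfl fun i _ => Finset.sum_congr rfl fun j _ => ?_
        rw [hBe i j a b]
        ring
      set vK : EuclideanSpace ℝ ((Fin q × Fin q) × (Fin q × Fin q)) :=
        WithLp.toLp 2 (fun pr : (Fin q × Fin q) × (Fin q × Fin q) => v pr.1 * v pr.2) with hvK
      have hxS : (vK, (0 : EuclideanSpace ℝ ((Fin m × Fin q) × (Fin m × Fin q)))) ∈ Sset := by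
        constructor
        · have : (Matrix.of fun p r : Fin q × Fin q => vK (p, r)) = Matrix.vecMulVec v v := by
            ext p r
            simp [hvK, Matrix.vecMulVec_apply]
          rw [this]
          exact vecMulVec_psd v
        · convert (Matrix.PosSemidef.zero : (0 : Matrix _ _ ℝ).PosSemidef) using 1; ext; simp
      have h2 := hpos _ hxS
      have e3 : ∑ pr : (Fin m × Fin q) × (Fin m × Fin q), Fmap m q B (vK, 0) pr * y pr
          = ∑ a, ∑ k, ∑ b, ∑ l, ∑ i, ∑ j,
              (v (a, k) * B i j a b * v (b, l)) * y ((i, k), (j, l)) := by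
        rw [sum_pair_expand (fun pr => Fmap m q B (vK, 0) pr * y pr)]
        rw [sum6_reorder (fun a k b l i j =>
          (v (a, k) * B i j a b * v (b, l)) * y ((i, k), (j, l)))]
        refine Finset.sum_congr rfl fun i _ => Finset.sum_congr rfl fun k _ =>
          Finset.sum_congr rfl fun j _ => Finset.sum_congr rfl fun l _ => ?_
        rw [Fmap_apply]
        simp only [hvK, PiLp.zero_apply, add_zero, Finset.sum_mul]
        refine Finset.sum_congr rfl fun a _ => Finset.sum_congr rfl fun b _ => by ring
      rw [t1]
      simp only [← Finset.sum_div, Finset.sum_add_distrib, t2]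
      rw [← e3] at *
      have h3 := hpos _ hxS
      linarith
end

section
/- Let M ∈ ℝ^{(mq)×(mq)} be positive semidefinite with q×q blocks M_{ij} (1 ≤ i,j ≤ m), and let r = rank(M). Then there exist n = r + q, real symmetric n×n matrices X₁,…,X_m, and the orthogonal projection P = diag(0_r, Id_q) ∈ ℝ^{n×n}, such that for all i,j: P X_i X_j P equals the n×n matrix whose bottom-right q×q corner is M_{ij} and all other entries are zero. Consequently, for any family of matrices H_{ij} ∈ ℝ^{q×q}, (Id_q ⊗ P)(Σ_{i,j} H_{ij} ⊗ X_i X_j)(Id_q ⊗ P) is, up to the zero rows and columns selected by P, equal to Σ_{i,j} H_{ij} ⊗ M_{ij}. -/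
open Matrix Kronecker

lemma exists_factor {n : Type*} [Fintype n] [DecidableEq n] {M : Matrix n n ℝ}
    (hM : M.PosSemidef) : ∃ B : Matrix n (Fin M.rank) ℝ, M = B * Bᵀ := by
  have hA := hM.isHermitian
  have hc : Fintype.card (Fin M.rank) = Fintype.card {i // hA.eigenvalues i ≠ 0} := by
    rw [Fintype.card_fin, hA.rank_eq_card_non_zero_eigs]
  let e : Fin M.rank ≃ {i // hA.eigenvalues i ≠ 0} := Fintype.equivOfCardEq hc
  set U := (hA.eigenvectorUnitary : Matrix n n ℝ) with hU
  set g : n → n → n → ℝ := fun p p' i => U p i * hA.eigenvalues i * U p' i with hg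
  have hspec : ∀ p p', M p p' = ∑ i, g p p' i := by
    intro p p'
    conv_lhs => rw [hA.spectral_theorem, Unitary.conjStarAlgAut_apply]
    rw [Matrix.mul_apply]
    refine Finset.sum_congr rfl fun x _ => ?_
    rw [Matrix.mul_diagonal, Matrix.star_apply, star_trivial]
    simp [hg, hU, Function.comp]
  refine ⟨Matrix.of fun p k => U p (e k) * Real.sqrt (hA.eigenvalues (e k)), ?_⟩
  ext p p'
  rw [Matrix.mul_apply, hspec p p']
  have key : ∀ k : Fin M.rank,
      (Matrix.of fun p k => U p (e k) * Real.sqrt (hA.eigenvalues (e k))) p k *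
      (Matrix.of fun p k => U p (e k) * Real.sqrt (hA.eigenvalues (e k)))ᵀ k p' =
      g p p' ((e k) : n) := by
    intro k
    have h0 : (0:ℝ) ≤ hA.eigenvalues (e k) := hM.eigenvalues_nonneg _
    simp only [Matrix.of_apply, Matrix.transpose_apply, hg]
    rw [mul_mul_mul_comm, Real.mul_self_sqrt h0]
    ring
  rw [Fintype.sum_equiv e _ (fun i : {i // hA.eigenvalues i ≠ 0} => g p p' i.1) key]
  rw [← Finset.sum_subtype (Finset.univ.filter fun i => hA.eigenvalues i ≠ 0)
    (fun x => by simp) (g p p'), Finset.sum_filter_of_ne]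
  intro i _ h hzero
  apply h
  simp [hg, hzero]


/-- **Construction of the evaluation point in the proof of Theorem 1.1.** Given a
positive semidefinite `M ∈ ℝ^{(mq)×(mq)}` with blocks `Mᵢⱼ` and `r = rank M`, there
are symmetric `(r+q)×(r+q)` matrices `X₁, …, X_m` (indexed by `Fin r ⊕ Fin q`) such
that, with `P = diag(0_r, Id_q)`, the compression `P Xᵢ Xⱼ P` has bottom-right block
`Mᵢⱼ` and all other entries zero; consequently, for any family `Hᵢⱼ ∈ ℝ^{q×q}`, the
compression `(Id_q ⊗ P) (∑ Hᵢⱼ ⊗ Xᵢ Xⱼ) (Id_q ⊗ P)` restricted to the coordinates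
selected by `P` equals `∑ Hᵢⱼ ⊗ Mᵢⱼ`. -/
theorem stmt_9 (m q : ℕ)
    (M : Matrix (Fin m × Fin q) (Fin m × Fin q) ℝ) (hM : M.PosSemidef) :
    ∃ X : Fin m → Matrix (Fin M.rank ⊕ Fin q) (Fin M.rank ⊕ Fin q) ℝ,
      (∀ i, (X i).IsSymm) ∧
      (∀ i j,
        (Matrix.fromBlocks (0 : Matrix (Fin M.rank) (Fin M.rank) ℝ) 0 0
            (1 : Matrix (Fin q) (Fin q) ℝ)) * (X i * X j) *
          (Matrix.fromBlocks (0 : Matrix (Fin M.rank) (Fin M.rank) ℝ) 0 0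
            (1 : Matrix (Fin q) (Fin q) ℝ)) =
        Matrix.fromBlocks 0 0 0 (Matrix.of fun a b => M (i, a) (j, b))) ∧
      (∀ H : Fin m → Fin m → Matrix (Fin q) (Fin q) ℝ,
        (((1 : Matrix (Fin q) (Fin q) ℝ) ⊗ₖ
            Matrix.fromBlocks (0 : Matrix (Fin M.rank) (Fin M.rank) ℝ) 0 0
              (1 : Matrix (Fin q) (Fin q) ℝ)) *
          (∑ i, ∑ j, H i j ⊗ₖ (X i * X j)) *
          ((1 : Matrix (Fin q) (Fin q) ℝ) ⊗ₖ
            Matrix.fromBlocks (0 : Matrix (Fin M.rank) (Fin M.rank) ℝ) 0 0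
              (1 : Matrix (Fin q) (Fin q) ℝ))).submatrix
            (fun p : Fin q × Fin q => (p.1, Sum.inr p.2))
            (fun p : Fin q × Fin q => (p.1, Sum.inr p.2)) =
          ∑ i, ∑ j, H i j ⊗ₖ (Matrix.of fun a b => M (i, a) (j, b))) := by
  obtain ⟨B, hB⟩ := exists_factor hM
  set V : Fin m → Matrix (Fin q) (Fin M.rank) ℝ :=
    fun i => Matrix.of fun a k => B (i, a) k with hV
  have hVV : ∀ i j, V i * (V j)ᵀ = (Matrix.of fun a b => M (i, a) (j, b)) := by
    intro i j
    ext a b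
    simp [Matrix.mul_apply, hV, hB]
  have h2 : ∀ i j : Fin m,
      (Matrix.fromBlocks (0 : Matrix (Fin M.rank) (Fin M.rank) ℝ) 0 0
          (1 : Matrix (Fin q) (Fin q) ℝ)) *
        ((Matrix.fromBlocks 0 (V i)ᵀ (V i) 0) * (Matrix.fromBlocks 0 (V j)ᵀ (V j) 0)) *
        (Matrix.fromBlocks (0 : Matrix (Fin M.rank) (Fin M.rank) ℝ) 0 0
          (1 : Matrix (Fin q) (Fin q) ℝ)) =
      Matrix.fromBlocks 0 0 0 (Matrix.of fun a b => M (i, a) (j, b)) := by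
    intro i j
    rw [Matrix.fromBlocks_multiply, Matrix.fromBlocks_multiply, Matrix.fromBlocks_multiply]
    simp only [Matrix.mul_zero, Matrix.zero_mul, Matrix.mul_one, Matrix.one_mul,
      add_zero, zero_add, hVV]
  refine ⟨fun i => Matrix.fromBlocks 0 (V i)ᵀ (V i) 0, fun i => ?_, h2, ?_⟩
  · rw [Matrix.IsSymm, Matrix.fromBlocks_transpose, Matrix.transpose_transpose,
      Matrix.transpose_zero, Matrix.transpose_zero]
  · intro H
    rw [show (∑ i, ∑ j, H i j ⊗ₖ
        ((Matrix.fromBlocks 0 (V i)ᵀ (V i) 0) * (Matrix.fromBlocks 0 (V j)ᵀ (V j) 0))) =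
        ∑ i, ∑ j, H i j ⊗ₖ
        ((Matrix.fromBlocks 0 (V i)ᵀ (V i) 0) * (Matrix.fromBlocks 0 (V j)ᵀ (V j) 0)) from rfl]
    have h3 : ((1 : Matrix (Fin q) (Fin q) ℝ) ⊗ₖ
          Matrix.fromBlocks (0 : Matrix (Fin M.rank) (Fin M.rank) ℝ) 0 0
            (1 : Matrix (Fin q) (Fin q) ℝ)) *
        (∑ i, ∑ j, H i j ⊗ₖ
          ((Matrix.fromBlocks 0 (V i)ᵀ (V i) 0) * (Matrix.fromBlocks 0 (V j)ᵀ (V j) 0))) *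
        ((1 : Matrix (Fin q) (Fin q) ℝ) ⊗ₖ
          Matrix.fromBlocks (0 : Matrix (Fin M.rank) (Fin M.rank) ℝ) 0 0
            (1 : Matrix (Fin q) (Fin q) ℝ)) =
        ∑ i, ∑ j, H i j ⊗ₖ Matrix.fromBlocks 0 0 0 (Matrix.of fun a b => M (i, a) (j, b)) := by
      simp only [Finset.mul_sum, Finset.sum_mul, ← Matrix.mul_kronecker_mul,
        Matrix.one_mul, Matrix.mul_one]
      refine Finset.sum_congr rfl fun i _ => Finset.sum_congr rfl fun j _ => ?_
      rw [h2 i j]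
    rw [h3]
    ext ⟨a, b⟩ ⟨c, d⟩
    simp [Matrix.submatrix_apply, Matrix.sum_apply, Matrix.fromBlocks_apply₂₂]
end

section
/- Define the 4×4-matrix-coefficient noncommutative polynomials in two variables f(X) = diag(X₁X₂ + X₂X₁ − X₂X₂, 0_n, 0_n, 0_n) and g(X) = diag(X₁X₁ − X₂X₂, X₁X₂ + X₂X₁) ⊕ [[0_n, X₁X₂ − X₂X₁],[X₂X₁ − X₁X₂, 0_n]] for tuples (X₁, X₂) of real symmetric n×n matrices (so f(X), g(X) are 4n×4n block matrices). Then for every n ∈ ℕ⁺ and all real symmetric n×n matrices X₁, X₂: if g(X) is positive semidefinite, then f(X) is positive semidefinite. -/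
open Matrix

private lemma psd_fromBlocks_diag {m l : Type*} [Fintype m] [Fintype l]
    {A : Matrix m m ℝ} {D : Matrix l l ℝ}
    (hA : A.PosSemidef) (hD : D.PosSemidef) :
    (fromBlocks A 0 0 D).PosSemidef := by
  rw [posSemidef_iff_dotProduct_mulVec]
  constructor
  · unfold Matrix.IsHermitian
    rw [fromBlocks_conjTranspose, hA.1.eq, hD.1.eq]
    simp
  · intro x
    rw [← Sum.elim_comp_inl_inr x]
    simp only [fromBlocks_mulVec, zero_mulVec, add_zero, zero_add,
      Function.star_sumElim, sumElim_dotProduct_sumElim]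
    exact add_nonneg (hA.dotProduct_mulVec_nonneg _) (hD.dotProduct_mulVec_nonneg _)

private lemma key_ring {R : Type*} [Ring R] {a b : R} (h : a * b = b * a) :
    (a * b - b * b) * (a * b + b * b) = b * (a * a - b * b) * b := by
  have hc : Commute a b := h
  have m1 : a * b * (a * b) = b * (a * a) * b := by
    simp only [mul_assoc]
    rw [hc.left_comm]
  have m2 : a * b * (b * b) = b * b * (a * b) := by
    simp only [mul_assoc]
    rw [hc.left_comm, hc.left_comm]
  calc (a * b - b * b) * (a * b + b * b)
      = a * b * (a * b) + a * b * (b * b) - b * b * (a * b) - b * b * (b * b) := by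
        noncomm_ring
    _ = b * (a * a) * b + b * b * (a * b) - b * b * (a * b) - b * b * (b * b) := by
        rw [m1, m2]
    _ = b * (a * a - b * b) * b := by noncomm_ring

/-- **Example 6.1, condition (1').** For
`f(X) = diag(X₁X₂ + X₂X₁ - X₂X₂, 0, 0, 0)` and
`g(X) = diag(X₁X₁ - X₂X₂, X₁X₂ + X₂X₁) ⊕ [[0, X₁X₂ - X₂X₁],[X₂X₁ - X₁X₂, 0]]`,
for every `n` and all real symmetric `n×n` matrices `X₁, X₂`:
if `g(X) ⪰ 0` then `f(X) ⪰ 0`. -/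
theorem stmt_12 (n : ℕ) (hn : 0 < n) (X₁ X₂ : Matrix (Fin n) (Fin n) ℝ)
    (h1 : X₁.IsSymm) (h2 : X₂.IsSymm)
    (hg : (Matrix.fromBlocks
        (Matrix.fromBlocks (X₁ * X₁ - X₂ * X₂) 0 0 (X₁ * X₂ + X₂ * X₁))
        (0 : Matrix (Fin n ⊕ Fin n) (Fin n ⊕ Fin n) ℝ)
        (0 : Matrix (Fin n ⊕ Fin n) (Fin n ⊕ Fin n) ℝ)
        (Matrix.fromBlocks 0 (X₁ * X₂ - X₂ * X₁) (X₂ * X₁ - X₁ * X₂) 0)).PosSemidef) :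
    (Matrix.fromBlocks
        (Matrix.fromBlocks (X₁ * X₂ + X₂ * X₁ - X₂ * X₂) 0 0 0)
        (0 : Matrix (Fin n ⊕ Fin n) (Fin n ⊕ Fin n) ℝ)
        (0 : Matrix (Fin n ⊕ Fin n) (Fin n ⊕ Fin n) ℝ)
        (0 : Matrix (Fin n ⊕ Fin n) (Fin n ⊕ Fin n) ℝ)).PosSemidef := by
  -- extract the diagonal blocks
  have hTL : (Matrix.fromBlocks (X₁ * X₁ - X₂ * X₂) 0 0 (X₁ * X₂ + X₂ * X₁)).PosSemidef := by
    exact hg.submatrix Sum.inl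
  have hBR : (Matrix.fromBlocks 0 (X₁ * X₂ - X₂ * X₁) (X₂ * X₁ - X₁ * X₂)
      (0 : Matrix (Fin n) (Fin n) ℝ)).PosSemidef := by
    exact hg.submatrix Sum.inr
  have hD : (X₁ * X₁ - X₂ * X₂).PosSemidef := by
    exact hTL.submatrix Sum.inl
  have hC2 : (X₁ * X₂ + X₂ * X₁).PosSemidef := by
    exact hTL.submatrix Sum.inr
  -- commutativity: X₁ * X₂ = X₂ * X₁
  have hAT : (X₁ * X₂ - X₂ * X₁)ᵀ = X₂ * X₁ - X₁ * X₂ := by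
    rw [transpose_sub, transpose_mul, transpose_mul, h1.eq, h2.eq]
  have hzero : ∀ w : Fin n → ℝ, (X₁ * X₂ - X₂ * X₁) *ᵥ w = 0 := by
    intro w
    have hq := hBR.dotProduct_mulVec_nonneg (Sum.elim (-((X₁ * X₂ - X₂ * X₁) *ᵥ w)) w)
    simp only [Function.star_sumElim, star_trivial, fromBlocks_mulVec, zero_mulVec,
      add_zero, zero_add, sumElim_dotProduct_sumElim, Sum.elim_comp_inl,
      Sum.elim_comp_inr] at hq
    rw [← hAT] at hq
    have hrw : w ⬝ᵥ ((X₁ * X₂ - X₂ * X₁)ᵀ *ᵥ (-((X₁ * X₂ - X₂ * X₁) *ᵥ w)))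
        = -(((X₁ * X₂ - X₂ * X₁) *ᵥ w) ⬝ᵥ ((X₁ * X₂ - X₂ * X₁) *ᵥ w)) := by
      rw [mulVec_neg, dotProduct_neg, dotProduct_mulVec, vecMul_transpose]
    rw [hrw, neg_dotProduct] at hq
    have hle : ((X₁ * X₂ - X₂ * X₁) *ᵥ w) ⬝ᵥ ((X₁ * X₂ - X₂ * X₁) *ᵥ w) ≤ 0 := by linarith
    have hge : 0 ≤ ((X₁ * X₂ - X₂ * X₁) *ᵥ w) ⬝ᵥ ((X₁ * X₂ - X₂ * X₁) *ᵥ w) := by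
      simpa using dotProduct_self_star_nonneg ((X₁ * X₂ - X₂ * X₁) *ᵥ w)
    exact dotProduct_self_eq_zero.mp (le_antisymm hle hge)
  have hcomm : X₁ * X₂ = X₂ * X₁ := by
    rw [← sub_eq_zero]
    ext i j
    have := congrFun (hzero (Pi.single j 1)) i
    rw [mulVec_single_one] at this
    simpa using this
  -- hermitian facts
  have hX2H : X₂ᴴ = X₂ := by
    rw [conjTranspose_eq_transpose_of_trivial, h2.eq]
  have hX1H : X₁ᴴ = X₁ := by
    rw [conjTranspose_eq_transpose_of_trivial, h1.eq]
  have hCH : (X₁ * X₂)ᴴ = X₁ * X₂ := by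
    rw [conjTranspose_mul, hX1H, hX2H, ← hcomm]
  have hSH : (X₂ * X₂)ᴴ = X₂ * X₂ := by rw [conjTranspose_mul, hX2H]
  have hCpsd : (X₁ * X₂).PosSemidef := by
    refine PosSemidef.of_dotProduct_mulVec_nonneg hCH fun x => ?_
    have h' := hC2.dotProduct_mulVec_nonneg x
    have heq : X₁ * X₂ + X₂ * X₁ = X₁ * X₂ + X₁ * X₂ := by rw [← hcomm]
    rw [heq, add_mulVec, dotProduct_add] at h'
    linarith
  have hSpsd : (X₂ * X₂).PosSemidef := by
    have h' := posSemidef_conjTranspose_mul_self X₂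
    rwa [hX2H] at h'
  -- key identity and PSD of the product
  have hKey : ((X₁ * X₂ - X₂ * X₂) * (X₁ * X₂ + X₂ * X₂)).PosSemidef := by
    rw [key_ring hcomm]
    have h' := hD.mul_mul_conjTranspose_same X₂
    rwa [hX2H] at h'
  -- N := X₁X₂ - X₂X₂ is PSD by an eigenvalue argument
  have hNherm : (X₁ * X₂ - X₂ * X₂).IsHermitian := by
    unfold Matrix.IsHermitian
    rw [conjTranspose_sub, hCH, hSH]
  have hN : (X₁ * X₂ - X₂ * X₂).PosSemidef := by
    refine hNherm.posSemidef_iff_eigenvalues_nonneg.mpr fun i => (?_ : 0 ≤ hNherm.eigenvalues i)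
    by_contra hneg
    push_neg at hneg
    have hEig : (X₁ * X₂ - X₂ * X₂) *ᵥ ⇑(hNherm.eigenvectorBasis i)
        = hNherm.eigenvalues i • ⇑(hNherm.eigenvectorBasis i) :=
      hNherm.mulVec_eigenvectorBasis i
    set lam := hNherm.eigenvalues i with hlamdef
    set v : Fin n → ℝ := ⇑(hNherm.eigenvectorBasis i) with hvdef
    have hvne : v ≠ 0 := by
      intro hcon
      exact hNherm.eigenvectorBasis.orthonormal.ne_zero i (by ext j; exact congrFun hcon j)
    have hNT : (X₁ * X₂ - X₂ * X₂)ᵀ = X₁ * X₂ - X₂ * X₂ := by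
      have h' := hNherm.eq
      rwa [conjTranspose_eq_transpose_of_trivial] at h'
    have hq1 : 0 ≤ lam * (v ⬝ᵥ ((X₁ * X₂ + X₂ * X₂) *ᵥ v)) := by
      have h' := hKey.dotProduct_mulVec_nonneg v
      rw [star_trivial, ← mulVec_mulVec, dotProduct_mulVec, ← mulVec_transpose,
        hNT, hEig, smul_dotProduct, smul_eq_mul] at h'
      exact h'
    have hCv : 0 ≤ v ⬝ᵥ ((X₁ * X₂) *ᵥ v) := by simpa using hCpsd.dotProduct_mulVec_nonneg v
    have hSv : 0 ≤ v ⬝ᵥ ((X₂ * X₂) *ᵥ v) := by simpa using hSpsd.dotProduct_mulVec_nonneg v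
    have hvw : v ⬝ᵥ ((X₁ * X₂ + X₂ * X₂) *ᵥ v)
        = v ⬝ᵥ ((X₁ * X₂) *ᵥ v) + v ⬝ᵥ ((X₂ * X₂) *ᵥ v) := by
      rw [add_mulVec, dotProduct_add]
    have hSvz : v ⬝ᵥ ((X₂ * X₂) *ᵥ v) = 0 := by nlinarith
    have hX2v : X₂ *ᵥ v = 0 := by
      apply dotProduct_self_eq_zero.mp
      rw [← hSvz, ← mulVec_mulVec, dotProduct_mulVec, ← mulVec_transpose, h2.eq]
      exact dotProduct_comm _ _
    have hNv : (X₁ * X₂ - X₂ * X₂) *ᵥ v = 0 := by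
      rw [sub_mulVec, ← mulVec_mulVec, ← mulVec_mulVec, hX2v, mulVec_zero, mulVec_zero,
        sub_zero]
    rw [hEig] at hNv
    rcases smul_eq_zero.mp hNv with h' | h'
    · exact absurd h' (ne_of_lt hneg)
    · exact hvne h'
  -- assemble
  have hM : (X₁ * X₂ + X₂ * X₁ - X₂ * X₂).PosSemidef := by
    have heq : X₁ * X₂ + X₂ * X₁ - X₂ * X₂ = X₁ * X₂ + (X₁ * X₂ - X₂ * X₂) := by
      rw [← hcomm]; abel
    rw [heq]
    exact hCpsd.add hN
  exact psd_fromBlocks_diag (psd_fromBlocks_diag hM .zero) .zero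
end

section
/- For real symmetric n×n matrices X₀ and X (n ∈ ℕ⁺), define the 2n×2n block matrices h₁(X₀, X) = [[X², X X₀],[X₀ X, X₀²]] and h₂(X₀, X) = [[X², X₀ X],[X X₀, X₀²]] (both homogenizations of the same nonhomogeneous polynomial f(X) = [[X², X],[X, Id_n]]). Then h₁(X₀, X) is positive semidefinite for every n ∈ ℕ⁺ and all real symmetric n×n matrices X₀, X, whereas there exist n ∈ ℕ⁺ and real symmetric n×n matrices X₀, X such that h₂(X₀, X) is not positive semidefinite; correspondingly, writing h = Σ A_{ij} ⊗ X_i X_j with (X₁, X₂) = (X, X₀) and 2×2 blocks A_{ij}, the 4×4 coefficient matrix (A_{ij}) of h₁ is positive semidefinite, while the coefficient matrix of h₂ is not. -/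
open Matrix Kronecker

/-- Coefficients of the homogenization `h₁(x₀, x) = [[x², x x₀],[x₀ x, x₀²]]` of
`f(x) = [[x², x],[x, 1]]`, with variables ordered as `(x₁, x₂) = (x, x₀)`. -/
def C1 : Fin 2 → Fin 2 → Matrix (Fin 2) (Fin 2) ℝ :=
  ![![!![1, 0; 0, 0], !![0, 1; 0, 0]], ![!![0, 0; 1, 0], !![0, 0; 0, 1]]]

/-- Coefficients of the homogenization `h₂(x₀, x) = [[x², x₀ x],[x x₀, x₀²]]` of
`f(x) = [[x², x],[x, 1]]`, with variables ordered as `(x₁, x₂) = (x, x₀)`. -/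
def C2 : Fin 2 → Fin 2 → Matrix (Fin 2) (Fin 2) ℝ :=
  ![![!![1, 0; 0, 0], !![0, 0; 1, 0]], ![!![0, 1; 0, 0], !![0, 0; 0, 1]]]

lemma h1_psd (n : ℕ) (X0 X : Matrix (Fin n) (Fin n) ℝ) (h0 : X0.IsSymm) (h : X.IsSymm) :
    (∑ i, ∑ j, C1 i j ⊗ₖ (![X, X0] i * ![X, X0] j)).PosSemidef := by
  have key : (∑ i, ∑ j, C1 i j ⊗ₖ (![X, X0] i * ![X, X0] j)) =
      (Matrix.of fun (k : Fin n) (q : Fin 2 × Fin n) => ![X, X0] q.1 k q.2)ᴴ *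
      (Matrix.of fun (k : Fin n) (q : Fin 2 × Fin n) => ![X, X0] q.1 k q.2) := by
    ext ⟨a, p⟩ ⟨b, q⟩
    simp only [Matrix.sum_apply, Fin.sum_univ_two, kroneckerMap_apply, Matrix.mul_apply,
      Matrix.conjTranspose_apply, Matrix.of_apply, star_trivial, C1]
    fin_cases a <;> fin_cases b <;> norm_num <;>
      (rw [Matrix.mul_apply];
       exact Finset.sum_congr rfl fun k _ => by
         simp only [h.apply q k, h0.apply q k, h.apply p k, h0.apply p k, mul_comm])
  rw [key]
  exact Matrix.posSemidef_conjTranspose_mul_self _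

lemma coeff1_psd : (Matrix.of fun p r : Fin 2 × Fin 2 => C1 p.1 r.1 p.2 r.2).PosSemidef := by
  have key : (Matrix.of fun p r : Fin 2 × Fin 2 => C1 p.1 r.1 p.2 r.2) =
      (Matrix.of fun (_ : Fin 1) (p : Fin 2 × Fin 2) => if p.1 = p.2 then (1:ℝ) else 0)ᴴ *
      (Matrix.of fun (_ : Fin 1) (p : Fin 2 × Fin 2) => if p.1 = p.2 then (1:ℝ) else 0) := by
    ext ⟨a, b⟩ ⟨c, d⟩
    fin_cases a <;> fin_cases b <;> fin_cases c <;> fin_cases d <;>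
      simp [Matrix.mul_apply, C1]
  rw [key]
  exact Matrix.posSemidef_conjTranspose_mul_self _

lemma coeff2_not_psd :
    ¬ (Matrix.of fun p r : Fin 2 × Fin 2 => C2 p.1 r.1 p.2 r.2).PosSemidef := by
  intro hp
  have := hp.dotProduct_mulVec_nonneg (fun p => ![![(0:ℝ), 1], ![-1, 0]] p.1 p.2)
  simp [Matrix.mulVec, dotProduct, Fintype.sum_prod_type, Fin.sum_univ_two, C2] at this
  norm_num at this

lemma h2_counterexample : ∃ (n : ℕ) (_ : 0 < n) (X0 X : Matrix (Fin n) (Fin n) ℝ),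
    X0.IsSymm ∧ X.IsSymm ∧
    ¬ (∑ i, ∑ j, C2 i j ⊗ₖ (![X, X0] i * ![X, X0] j)).PosSemidef := by
  refine ⟨2, by norm_num, !![1, 0; 0, 0], !![0, 1; 1, 0],
    by ext i j : 2; fin_cases i <;> fin_cases j <;> rfl,
    by ext i j : 2; fin_cases i <;> fin_cases j <;> rfl, fun hp => ?_⟩
  have := hp.dotProduct_mulVec_nonneg (fun p => ![![(1:ℝ), 0], ![0, -1]] p.1 p.2)
  simp [Matrix.sum_apply, Matrix.mulVec, dotProduct, Fintype.sum_prod_type,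
    Fin.sum_univ_two, kroneckerMap_apply, Matrix.mul_apply, C2] at this
  norm_num at this

/-- **Non-uniqueness of homogenization.** `h₁(X₀, X) = [[X², X X₀],[X₀ X, X₀²]]` is
positive semidefinite for all symmetric `X₀, X` of all sizes, while
`h₂(X₀, X) = [[X², X₀ X],[X X₀, X₀²]]` is not; correspondingly the coefficient matrix
of `h₁` is positive semidefinite and that of `h₂` is not. -/
theorem stmt_15 :
    (∀ (n : ℕ), 0 < n → ∀ X0 X : Matrix (Fin n) (Fin n) ℝ, X0.IsSymm → X.IsSymm →
      (∑ i, ∑ j, C1 i j ⊗ₖ (![X, X0] i * ![X, X0] j)).PosSemidef) ∧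
    (∃ (n : ℕ) (_ : 0 < n) (X0 X : Matrix (Fin n) (Fin n) ℝ),
      X0.IsSymm ∧ X.IsSymm ∧
      ¬ (∑ i, ∑ j, C2 i j ⊗ₖ (![X, X0] i * ![X, X0] j)).PosSemidef) ∧
    (Matrix.of fun p r : Fin 2 × Fin 2 => C1 p.1 r.1 p.2 r.2).PosSemidef ∧
    ¬ (Matrix.of fun p r : Fin 2 × Fin 2 => C2 p.1 r.1 p.2 r.2).PosSemidef :=
  ⟨fun n _ X0 X h0 h => h1_psd n X0 X h0 h, h2_counterexample, coeff1_psd, coeff2_not_psd⟩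
end
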